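/- arXiv:2108.12316 — 6 statements merged into one kernel-verified Lean document; each statement's English description precedes it below -/
import Mathlib

section
/- Let f : ℝ^n → ℝ be a C¹ function such that ρ = e^{−f}·β is a probability measure. Then for every compactly supported C^∞ vector field ξ : ℝ^n → ℝ^n and every compactly supported C^∞ function u : ℝ^n → ℝ, ∫ ⟨∇u(x), ξ(x)⟩ dρ(x) = ∫ u(x)·(⟨x, ξ(x)⟩ − div ξ(x) + ⟨∇f(x), ξ(x)⟩) dρ(x). In other words, the divergence operator δ_ρ adjoint to the gradient under ρ satisfies δ_ρ ξ = δξ + ⟨∇f, ξ⟩, where δξ(x) = ⟨x, ξ(x)⟩ − div ξ(x) is the Gaussian divergence. -/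
open MeasureTheory Real Filter Topology

/-- The standard Gaussian measure on `ℝ^n`, i.e. the measure with density
`(2π)^(-n/2) exp(-|x|²/2)` with respect to Lebesgue measure. -/
noncomputable def stdGaussian (n : ℕ) : Measure (Fin n → ℝ) :=
  volume.withDensity fun x =>
    ENNReal.ofReal ((2 * π) ^ (-(n : ℝ) / 2) * Real.exp (-(∑ i, x i ^ 2) / 2))

/-- The gradient of `f : ℝ^n → ℝ`, given coordinatewise by `(∇f)(x)ᵢ = ∂ᵢf(x)`. -/
noncomputable def grad {n : ℕ} (f : (Fin n → ℝ) → ℝ) (x : Fin n → ℝ) : Fin n → ℝ :=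
  fun i => fderiv ℝ f x (Pi.single i 1)

/-- The Hessian matrix of `f : ℝ^n → ℝ`. -/
noncomputable def hess {n : ℕ} (f : (Fin n → ℝ) → ℝ) (x : Fin n → ℝ) :
    Matrix (Fin n) (Fin n) ℝ :=
  Matrix.of fun i j => fderiv ℝ (fun y => grad f y j) x (Pi.single i 1)

/-- The Jacobian matrix of a vector field `ξ : ℝ^n → ℝ^n`:
`(Dξ)(x)ᵢⱼ = ∂ⱼξᵢ(x)`. -/
noncomputable def jac {n : ℕ} (ξ : (Fin n → ℝ) → Fin n → ℝ) (x : Fin n → ℝ) :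
    Matrix (Fin n) (Fin n) ℝ :=
  Matrix.of fun i j => fderiv ℝ (fun y => ξ y i) x (Pi.single j 1)

/-- Integration by parts for `ρ = e^{-f}·β`: the divergence operator
adjoint to the gradient under `ρ` satisfies `δ_ρ ξ = δξ + ⟨∇f, ξ⟩`, where
`δξ(x) = ⟨x, ξ(x)⟩ − div ξ(x)`. -/
theorem integration_by_parts_weighted (n : ℕ)
    (f : (Fin n → ℝ) → ℝ) (hf : ContDiff ℝ 1 f)
    (ρ : Measure (Fin n → ℝ))
    (hρ : ρ = (stdGaussian n).withDensity fun x => ENNReal.ofReal (Real.exp (-f x)))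
    (hprob : IsProbabilityMeasure ρ)
    (ξ : (Fin n → ℝ) → Fin n → ℝ) (hξ : ContDiff ℝ (⊤ : ℕ∞) ξ) (hξc : HasCompactSupport ξ)
    (u : (Fin n → ℝ) → ℝ) (hu : ContDiff ℝ (⊤ : ℕ∞) u) (huc : HasCompactSupport u) :
    ∫ x, (∑ i, grad u x i * ξ x i) ∂ρ
      = ∫ x, u x * ((∑ i, x i * ξ x i) - (∑ i, jac ξ x i i)
          + ∑ i, grad f x i * ξ x i) ∂ρ := by
  classical
  set C : ℝ := (2 * π) ^ (-(n : ℝ) / 2) with hC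
  have hCpos : 0 < C := Real.rpow_pos_of_pos (by positivity) _
  set φ : (Fin n → ℝ) → ℝ := fun x => (-1/2 : ℝ) * (∑ j, x j ^ 2) + -f x with hφdef
  set w : (Fin n → ℝ) → ℝ := fun x => C * Real.exp (φ x) with hwdef
  have hwpos : ∀ x, 0 < w x := fun x => mul_pos hCpos (Real.exp_pos _)
  have hfc := hf.continuous
  have hφc : Continuous φ := by
    apply Continuous.add
    · exact continuous_const.mul (continuous_finset_sum _ fun i _ => (continuous_apply i).pow 2)
    · exact hfc.neg
  have hwc : Continuous w := continuous_const.mul hφc.rexp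
  -- ρ as density over volume
  have hρ' : ρ = volume.withDensity fun x => ENNReal.ofReal (w x) := by
    rw [hρ, stdGaussian, ← withDensity_mul]
    · congr 1; funext x
      simp only [Pi.mul_apply]
      rw [← ENNReal.ofReal_mul (by positivity)]
      congr 1
      simp only [hwdef, hφdef]
      rw [Real.exp_add, ← mul_assoc]
      congr 2
      ring
    · exact ENNReal.measurable_ofReal.comp (by fun_prop)
    · exact ENNReal.measurable_ofReal.comp (by fun_prop)
  -- integral conversion
  have hconv : ∀ g : (Fin n → ℝ) → ℝ, ∫ x, g x ∂ρ = ∫ x, g x * w x := by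
    intro g
    rw [hρ']
    have hm : Measurable fun x => (w x).toNNReal := hwc.measurable.real_toNNReal
    simp only [ENNReal.ofReal]
    rw [integral_withDensity_eq_integral_smul hm g]
    congr 1; funext x
    simp [NNReal.smul_def, Real.coe_toNNReal _ (hwpos x).le, mul_comm]
  -- derivative of w
  have hq : ∀ x : (Fin n → ℝ), HasFDerivAt (fun y : (Fin n → ℝ) => ∑ j, y j ^ 2)
      (∑ j, (2 * x j) • (ContinuousLinearMap.proj j : (Fin n → ℝ) →L[ℝ] ℝ)) x := by
    intro x
    have h : ∀ j ∈ Finset.univ, HasFDerivAt (fun y : (Fin n → ℝ) => y j ^ 2)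
        ((2 * x j) • (ContinuousLinearMap.proj j : (Fin n → ℝ) →L[ℝ] ℝ)) x := by
      intro j _
      have hp := (ContinuousLinearMap.proj j : (Fin n → ℝ) →L[ℝ] ℝ).hasFDerivAt (x := x)
      have h := hp.mul hp
      have he : (fun y : (Fin n → ℝ) => y j ^ 2) = fun y => y j * y j := by funext y; ring
      rw [he, two_mul, add_smul]
      simp at h; exact h
    exact HasFDerivAt.fun_sum h
  have hdf : ∀ x, HasFDerivAt f (fderiv ℝ f x) x :=
    fun x => (hf.differentiable (by norm_num) x).hasFDerivAt
  have hφ' : ∀ x : (Fin n → ℝ), HasFDerivAt φ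
      ((-1/2 : ℝ) • (∑ j, (2 * x j) • (ContinuousLinearMap.proj j : (Fin n → ℝ) →L[ℝ] ℝ))
        + -(fderiv ℝ f x)) x :=
    fun x => (((hq x).const_mul _).add (hdf x).neg)
  have hw' : ∀ x : (Fin n → ℝ), HasFDerivAt w
      ((C * Real.exp (φ x)) • ((-1/2 : ℝ) • (∑ j, (2 * x j) • (ContinuousLinearMap.proj j : (Fin n → ℝ) →L[ℝ] ℝ))
        + -(fderiv ℝ f x))) x := by
    intro x
    have h := ((hφ' x).exp).const_mul C
    rw [smul_smul] at h
    exact h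
  have hdw : Differentiable ℝ w := fun x => ((hw' x).differentiableAt)
  have hfdw : ∀ (i : Fin n) (x : Fin n → ℝ),
      fderiv ℝ w x (Pi.single i 1) = w x * (-(x i) - grad f x i) := by
    intro i x
    rw [(hw' x).fderiv]
    have h2 : (∑ j, (2 * x j) • (ContinuousLinearMap.proj j : (Fin n → ℝ) →L[ℝ] ℝ))
        (Pi.single i 1) = 2 * x i := by
      rw [ContinuousLinearMap.sum_apply]
      simp [Pi.single_apply]
    simp only [ContinuousLinearMap.add_apply, ContinuousLinearMap.smul_apply,
      ContinuousLinearMap.neg_apply, h2, smul_eq_mul, grad, hwdef]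
    ring
  -- components of ξ
  have hξi : ∀ i, ContDiff ℝ (⊤ : ℕ∞) fun y => ξ y i := fun i => (contDiff_pi.mp hξ) i
  have hξic : ∀ i : Fin n, HasCompactSupport fun y => ξ y i :=
    fun i => hξc.comp_left (g := fun v : Fin n → ℝ => v i) rfl
  have hξcont : ∀ i, Continuous fun y => ξ y i := fun i => (hξi i).continuous
  have hucont := hu.continuous
  have hgradu : ∀ i : Fin n, Continuous fun x => grad u x i := by
    intro i
    exact (hu.continuous_fderiv (by simp)).clm_apply continuous_const
  have hgradf : ∀ i : Fin n, Continuous fun x => grad f x i := by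
    intro i
    exact (hf.continuous_fderiv (by norm_num)).clm_apply continuous_const
  have hjacξ : ∀ i : Fin n, Continuous fun x => jac ξ x i i := by
    intro i
    exact ((hξi i).continuous_fderiv (by simp)).clm_apply continuous_const
  -- integrability helper
  have hInt : ∀ g : (Fin n → ℝ) → ℝ, Continuous g → HasCompactSupport g →
      Integrable (fun x => g x * w x) volume := by
    intro g hg hgc
    exact (hg.mul hwc).integrable_of_hasCompactSupport hgc.mul_right
  -- key identity per coordinate
  have key : ∀ i : Fin n, ∫ x, (grad u x i * ξ x i) * w x
      = ∫ x, (u x * (x i * ξ x i - jac ξ x i i + grad f x i * ξ x i)) * w x := by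
    intro i
    set v : (Fin n → ℝ) := Pi.single i 1 with hv
    set gi : (Fin n → ℝ) → ℝ := fun y => u y * ξ y i with hgi
    have hgic : HasCompactSupport gi := (hξic i).mul_left
    have hgicont : Continuous gi := hucont.mul (hξcont i)
    have hdgi : ∀ x, HasFDerivAt gi
        (u x • fderiv ℝ (fun y => ξ y i) x + ξ x i • fderiv ℝ u x) x := by
      intro x
      exact ((hu.differentiable (by simp) x).hasFDerivAt).mul
        (((hξi i).differentiable (by simp) x).hasFDerivAt)
    have hDgi : Differentiable ℝ gi := fun x => (hdgi x).differentiableAt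
    have hfdgi : ∀ x, fderiv ℝ gi x v = u x * jac ξ x i i + ξ x i * grad u x i := by
      intro x
      rw [(hdgi x).fderiv]
      simp [jac, grad, hv]
    -- integrability of the three combos
    have h1 : Integrable (fun x => fderiv ℝ w x v * gi x) volume := by
      have he : (fun x => fderiv ℝ w x v * gi x)
          = fun x => (gi x * (-(x i) - grad f x i)) * w x := by
        funext x; rw [hfdw i x]; ring
      rw [he]
      exact hInt _ (hgicont.mul (((continuous_apply i).neg).sub (hgradf i))) (hgic.mul_right)
    have h2 : Integrable (fun x => w x * fderiv ℝ gi x v) volume := by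
      have he : (fun x => w x * fderiv ℝ gi x v)
          = fun x => (u x * jac ξ x i i + ξ x i * grad u x i) * w x := by
        funext x; rw [hfdgi x]; ring
      rw [he]
      apply hInt _ ((hucont.mul (hjacξ i)).add ((hξcont i).mul (hgradu i)))
      apply HasCompactSupport.add
      · exact huc.mul_right
      · exact (hξic i).mul_right
    have h3 : Integrable (fun x => w x * gi x) volume := by
      have he : (fun x => w x * gi x) = fun x => gi x * w x := by funext x; ring
      rw [he]; exact hInt _ hgicont hgic
    have ibp := integral_mul_fderiv_eq_neg_fderiv_mul_of_integrable h1 h2 h3 (fun x _ => hdw x) (fun x _ => hDgi x)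
    -- rewrite both sides of ibp
    have hL : (fun x => w x * fderiv ℝ gi x v)
        = fun x => (u x * jac ξ x i i) * w x + (grad u x i * ξ x i) * w x := by
      funext x; rw [hfdgi x]; ring
    have hR : (fun x => fderiv ℝ w x v * gi x)
        = fun x => -((u x * (x i * ξ x i + grad f x i * ξ x i)) * w x) := by
      funext x; rw [hfdw i x]; simp only [hgi]; ring
    rw [hL, hR] at ibp
    rw [integral_neg, neg_neg] at ibp
    have hB : Integrable (fun x => grad u x i * ξ x i * w x) volume :=
      hInt _ ((hgradu i).mul (hξcont i)) ((hξic i).mul_left)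
    have h4 : Integrable (fun x => u x * (x i * ξ x i + grad f x i * ξ x i) * w x) volume := by
      exact hInt _ (hucont.mul ((((continuous_apply i).mul (hξcont i))).add
        ((hgradf i).mul (hξcont i)))) huc.mul_right
    have h5 : Integrable (fun x => u x * jac ξ x i i * w x) volume :=
      hInt _ (hucont.mul (hjacξ i)) huc.mul_right
    have e1 : ∫ x, grad u x i * ξ x i * w x
        = (∫ x, (u x * jac ξ x i i * w x + grad u x i * ξ x i * w x))
          - ∫ x, u x * jac ξ x i i * w x := by
      rw [integral_add h5 hB]; ring
    rw [e1, ibp, ← integral_sub h4 h5]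
    congr 1; funext x; ring
  -- assemble
  rw [hconv, hconv]
  have hLHS : (fun x => (∑ i, grad u x i * ξ x i) * w x)
      = fun x => ∑ i, (grad u x i * ξ x i) * w x := by
    funext x; rw [Finset.sum_mul]
  have hRHS : (fun x => (u x * ((∑ i, x i * ξ x i) - (∑ i, jac ξ x i i)
        + ∑ i, grad f x i * ξ x i)) * w x)
      = fun x => ∑ i, (u x * (x i * ξ x i - jac ξ x i i + grad f x i * ξ x i)) * w x := by
    funext x
    rw [← Finset.sum_sub_distrib, ← Finset.sum_add_distrib, Finset.mul_sum, Finset.sum_mul]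
  rw [hLHS, hRHS]
  rw [integral_finset_sum, integral_finset_sum]
  · exact Finset.sum_congr rfl fun i _ => key i
  · intro i _
    exact hInt _ (hucont.mul ((((continuous_apply i).mul (hξcont i)).sub (hjacξ i)).add
      ((hgradf i).mul (hξcont i)))) huc.mul_right
  · intro i _
    exact hInt _ ((hgradu i).mul (hξcont i)) ((hξic i).mul_left)
end

section
/- Let f : ℝ^n → ℝ be a C² function such that ρ = e^{−f}·β is a probability measure. For a compactly supported C^∞ vector field ξ : ℝ^n → ℝ^n define δ_ρ ξ(x) = ⟨x, ξ(x)⟩ − div ξ(x) + ⟨∇f(x), ξ(x)⟩. Then ∫ (δ_ρ ξ)² dρ = ∫ [ |ξ(x)|² + ⟨Hess f(x)·ξ(x), ξ(x)⟩ + trace(Dξ(x)·Dξ(x)) ] dρ(x), where Dξ(x) is the Jacobian matrix of ξ at x. -/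
open MeasureTheory Real Filter Topology

/-! ### Auxiliary material -/

namespace DivSecondMomentAux

open scoped ENNReal NNReal

variable {n : ℕ}

lemma pd_mul {a b : (Fin n → ℝ) → ℝ} {x : Fin n → ℝ} (ha : DifferentiableAt ℝ a x)
    (hb : DifferentiableAt ℝ b x) (v : Fin n → ℝ) :
    fderiv ℝ (fun y => a y * b y) x v
      = fderiv ℝ a x v * b x + a x * fderiv ℝ b x v := by
  rw [fderiv_fun_mul ha hb]
  simp [mul_comm]
  ring

lemma pd_sum {ι : Type*} {s : Finset ι} {g : ι → (Fin n → ℝ) → ℝ} {x : Fin n → ℝ}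
    (hg : ∀ j ∈ s, DifferentiableAt ℝ (g j) x) (v : Fin n → ℝ) :
    fderiv ℝ (fun y => ∑ j ∈ s, g j y) x v = ∑ j ∈ s, fderiv ℝ (g j) x v := by
  rw [fderiv_fun_sum hg]
  simp

lemma pd_proj {x : Fin n → ℝ} (i j : Fin n) :
    fderiv ℝ (fun y : Fin n → ℝ => y j) x (Pi.single i 1) = if j = i then 1 else 0 := by
  rw [(hasFDerivAt_apply j x).fderiv]
  simp [Pi.single_apply]

lemma contDiff_pd {g : (Fin n → ℝ) → ℝ} (hg : ContDiff ℝ (⊤ : ℕ∞) g) (v : Fin n → ℝ) :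
    ContDiff ℝ (⊤ : ℕ∞) (fun x => fderiv ℝ g x v) :=
  (hg.fderiv_right (by simp)).clm_apply contDiff_const

lemma cpt_pd {g : (Fin n → ℝ) → ℝ} (hg : HasCompactSupport g) (v : Fin n → ℝ) :
    HasCompactSupport (fun x => fderiv ℝ g x v) :=
  (hg.fderiv (𝕜 := ℝ)).comp_left (g := fun L : (Fin n → ℝ) →L[ℝ] ℝ => L v) rfl


lemma cpt_sum {ι : Type*} (s : Finset ι) (g : ι → (Fin n → ℝ) → ℝ) :
    (∀ j ∈ s, HasCompactSupport (g j)) →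
    HasCompactSupport fun x => ∑ j ∈ s, g j x := by
  classical
  induction s using Finset.induction_on with
  | empty =>
    intro _
    simp only [Finset.sum_empty]
    exact HasCompactSupport.zero
  | @insert a s' ha ih =>
    intro h
    have h1 : (fun x => ∑ j ∈ insert a s', g j x)
        = fun x => g a x + ∑ j ∈ s', g j x := by
      funext x
      exact Finset.sum_insert ha
    rw [h1]
    exact (h a (Finset.mem_insert_self a s')).add
      (ih fun j hjs => h j (Finset.mem_insert_of_mem hjs))

lemma pd_symm {g : (Fin n → ℝ) → ℝ} (hg : ContDiff ℝ (⊤ : ℕ∞) g) (x : Fin n → ℝ) (i j : Fin n) :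
    fderiv ℝ (fun y => fderiv ℝ g y (Pi.single i 1)) x (Pi.single j 1)
      = fderiv ℝ (fun y => fderiv ℝ g y (Pi.single j 1)) x (Pi.single i 1) := by
  have hd : DifferentiableAt ℝ (fderiv ℝ g) x :=
    ((hg.fderiv_right (m := 1) (WithTop.coe_le_coe.mpr le_top)).differentiable one_ne_zero).differentiableAt
  have h1 : ∀ v : Fin n → ℝ, ∀ w, fderiv ℝ (fun y => fderiv ℝ g y v) x w
      = fderiv ℝ (fderiv ℝ g) x w v := by
    intro v w
    rw [fderiv_clm_apply hd (differentiableAt_const v)]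
    simp
  rw [h1, h1]
  exact (hg.contDiffAt.isSymmSndFDerivAt (by rw [minSmoothness_of_isRCLikeNormedField]; exact WithTop.coe_le_coe.mpr le_top)) _ _

/-- the log-density `W` of `ρ` -/
noncomputable def Wf (f : (Fin n → ℝ) → ℝ) : (Fin n → ℝ) → ℝ :=
  fun x => (∑ j, x j ^ 2) / 2 + f x

/-- the density of `ρ` with respect to Lebesgue measure -/
noncomputable def Df (f : (Fin n → ℝ) → ℝ) : (Fin n → ℝ) → ℝ :=
  fun x => (2 * π) ^ (-(n : ℝ) / 2) * Real.exp (-Wf f x)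

lemma contDiff_Wf {f : (Fin n → ℝ) → ℝ} (hf : ContDiff ℝ 2 f) : ContDiff ℝ 2 (Wf f) := by
  apply ContDiff.add _ hf
  apply ContDiff.div_const
  exact ContDiff.sum fun j _ => (contDiff_apply ℝ ℝ j).pow 2

lemma contDiff_Df {f : (Fin n → ℝ) → ℝ} (hf : ContDiff ℝ 2 f) : ContDiff ℝ 2 (Df f) :=
  contDiff_const.mul ((contDiff_Wf hf).neg.exp)

/-- The derivative of `W`. -/
noncomputable def Wd (f : (Fin n → ℝ) → ℝ) (x : Fin n → ℝ) : (Fin n → ℝ) →L[ℝ] ℝ :=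
  (2:ℝ)⁻¹ • (∑ j, (2 * x j) • (ContinuousLinearMap.proj j : (Fin n → ℝ) →L[ℝ] ℝ))
    + fderiv ℝ f x

lemma Wd_apply {f : (Fin n → ℝ) → ℝ} (x : Fin n → ℝ) (i : Fin n) :
    Wd f x (Pi.single i 1) = x i + grad f x i := by
  simp [Wd, grad, ContinuousLinearMap.sum_apply, Pi.single_apply, Finset.mul_sum]

lemma hasFDerivAt_Wf {f : (Fin n → ℝ) → ℝ} (hf : ContDiff ℝ 2 f) (x : Fin n → ℝ) :
    HasFDerivAt (Wf f) (Wd f x) x := by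
  have h1 : ∀ j : Fin n, HasFDerivAt (fun y : Fin n → ℝ => y j ^ 2)
      ((2 * x j) • (ContinuousLinearMap.proj j : (Fin n → ℝ) →L[ℝ] ℝ)) x := by
    intro j
    have h0 : HasFDerivAt (fun y : Fin n → ℝ => y j)
        (ContinuousLinearMap.proj j : (Fin n → ℝ) →L[ℝ] ℝ) x := hasFDerivAt_apply j x
    have : HasFDerivAt (fun y : Fin n → ℝ => y j * y j)
        (x j • (ContinuousLinearMap.proj j : (Fin n → ℝ) →L[ℝ] ℝ) + x j • ContinuousLinearMap.proj j) x :=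
      h0.mul h0
    convert this using 1
    · ext y; simp [sq]
    · ext y; simp; ring
  have hq : HasFDerivAt (fun y : Fin n → ℝ => ∑ j, y j ^ 2)
      (∑ j, (2 * x j) • (ContinuousLinearMap.proj j : (Fin n → ℝ) →L[ℝ] ℝ)) x :=
    HasFDerivAt.fun_sum (fun j _ => h1 j)
  have hq2 := hq.const_smul (2:ℝ)⁻¹
  have hfd : HasFDerivAt f (fderiv ℝ f x) x :=
    (hf.differentiable (by norm_num) x).hasFDerivAt
  have := hq2.add hfd
  rw [show Wf f = ((2:ℝ)⁻¹ • fun y : Fin n → ℝ => ∑ j, y j ^ 2) + f from ?_]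
  · exact this
  ext y
  simp [Wf]
  ring

lemma hasFDerivAt_Df {f : (Fin n → ℝ) → ℝ} (hf : ContDiff ℝ 2 f) (x : Fin n → ℝ) :
    HasFDerivAt (Df f) (-Df f x • Wd f x) x := by
  have h1 := ((hasFDerivAt_Wf hf x).neg).exp
  have h2 := h1.const_mul ((2 * π) ^ (-(n : ℝ) / 2))
  refine h2.congr_fderiv ?_
  ext y
  simp [Df]
  ring

lemma rho_eq {f : (Fin n → ℝ) → ℝ} (hf : Continuous f) :
    (stdGaussian n).withDensity (fun x => ENNReal.ofReal (Real.exp (-f x)))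
      = volume.withDensity (fun x => ENNReal.ofReal (Df f x)) := by
  rw [stdGaussian, ← withDensity_mul]
  · congr 1
    funext x
    simp only [Pi.mul_apply]
    rw [← ENNReal.ofReal_mul (by positivity)]
    congr 1
    unfold Df Wf
    rw [mul_assoc, ← Real.exp_add]
    congr 2
    ring
  · apply Measurable.ennreal_ofReal
    fun_prop
  · apply Measurable.ennreal_ofReal
    exact (hf.neg.rexp).measurable

lemma integral_rho {f : (Fin n → ℝ) → ℝ} (hf : Continuous f) (g : (Fin n → ℝ) → ℝ) :
    ∫ x, g x ∂((stdGaussian n).withDensity (fun x => ENNReal.ofReal (Real.exp (-f x))))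
      = ∫ x, g x * Df f x := by
  rw [rho_eq hf]
  have hD : Continuous (Df f) := by
    apply continuous_const.mul
    apply Real.continuous_exp.comp
    apply Continuous.neg
    unfold Wf
    fun_prop
  have hmeas : Measurable fun x => Real.toNNReal (Df f x) :=
    (hD.measurable).real_toNNReal
  have h2 : (fun x => ENNReal.ofReal (Df f x))
      = fun x => ((fun x => Real.toNNReal (Df f x)) x : ℝ≥0∞) := rfl
  rw [h2, integral_withDensity_eq_integral_smul hmeas]
  congr 1
  funext x
  have : 0 ≤ Df f x := by unfold Df; positivity
  simp [NNReal.smul_def, Real.coe_toNNReal _ this, mul_comm]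

lemma integrable_mulD {f h : (Fin n → ℝ) → ℝ} (hf : ContDiff ℝ 2 f)
    (hh : Continuous h) (hhc : HasCompactSupport h) :
    Integrable (fun x => h x * Df f x) :=
  (hh.mul (contDiff_Df hf).continuous).integrable_of_hasCompactSupport hhc.mul_right

lemma integrable_mulD' {f h a : (Fin n → ℝ) → ℝ} (hf : ContDiff ℝ 2 f)
    (hh : Continuous h) (hhc : HasCompactSupport h) (ha : Continuous a) :
    Integrable (fun x => h x * (a x * Df f x)) := by
  have : (fun x => h x * (a x * Df f x)) = fun x => (h x * a x) * Df f x := by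
    funext x; ring
  rw [this]
  exact integrable_mulD hf (hh.mul ha) hhc.mul_right

/-- The key integration-by-parts lemma. -/
lemma ibp {f : (Fin n → ℝ) → ℝ} (hf : ContDiff ℝ 2 f)
    {g : (Fin n → ℝ) → ℝ} (hg : ContDiff ℝ 1 g) (hgc : HasCompactSupport g) (i : Fin n) :
    ∫ x, fderiv ℝ g x (Pi.single i 1) * Df f x
      = ∫ x, g x * ((x i + grad f x i) * Df f x) := by
  set v : Fin n → ℝ := Pi.single i 1 with hv
  have hDdiff : Differentiable ℝ (Df f) := (contDiff_Df hf).differentiable (by norm_num)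
  have hDfderiv : ∀ x, fderiv ℝ (Df f) x v = -((x i + grad f x i) * Df f x) := by
    intro x
    rw [(hasFDerivAt_Df hf x).fderiv]
    simp only [hv, ContinuousLinearMap.neg_apply, ContinuousLinearMap.smul_apply, Wd_apply,
      smul_eq_mul, neg_mul]
    ring
  have hcont_pd : Continuous fun x => fderiv ℝ g x v :=
    ((hg.fderiv_right (m := 0) (by norm_num)).continuous).clm_apply continuous_const
  have hcpt_pd : HasCompactSupport fun x => fderiv ℝ g x v :=
    (hgc.fderiv (𝕜 := ℝ)).comp_left (g := fun L : (Fin n → ℝ) →L[ℝ] ℝ => L v) rfl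
  have h1 : Integrable (fun x => fderiv ℝ g x v * Df f x) :=
    integrable_mulD hf hcont_pd hcpt_pd
  have h2 : Integrable (fun x => g x * fderiv ℝ (Df f) x v) := by
    have hc : Continuous fun x => fderiv ℝ (Df f) x v :=
      (((contDiff_Df hf).fderiv_right (m := 1) (by norm_num)).continuous).clm_apply
        continuous_const
    exact (hg.continuous.mul hc).integrable_of_hasCompactSupport hgc.mul_right
  have h3 : Integrable (fun x => g x * Df f x) :=
    integrable_mulD hf hg.continuous hgc
  have key := integral_mul_fderiv_eq_neg_fderiv_mul_of_integrable
    (μ := (volume : Measure (Fin n → ℝ))) (v := v)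
    h1 h2 h3 (fun x _ => hg.differentiable one_ne_zero x) (fun x _ => hDdiff x)
  have h4 : ∫ x, g x * fderiv ℝ (Df f) x v
      = - ∫ x, g x * ((x i + grad f x i) * Df f x) := by
    rw [← integral_neg]
    congr 1
    funext x
    rw [hDfderiv x]
    ring
  rw [h4] at key
  linarith [key]

end DivSecondMomentAux

open DivSecondMomentAux in
/-- Second-moment identity for the weighted divergence
`δ_ρ ξ(x) = ⟨x, ξ(x)⟩ − div ξ(x) + ⟨∇f(x), ξ(x)⟩` under `ρ = e^{-f}·β`:
`∫ (δ_ρ ξ)² dρ = ∫ (|ξ|² + ⟨Hess f · ξ, ξ⟩ + trace(Dξ · Dξ)) dρ`. -/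
theorem divergence_second_moment (n : ℕ)
    (f : (Fin n → ℝ) → ℝ) (hf : ContDiff ℝ 2 f)
    (ρ : Measure (Fin n → ℝ))
    (hρ : ρ = (stdGaussian n).withDensity fun x => ENNReal.ofReal (Real.exp (-f x)))
    (hprob : IsProbabilityMeasure ρ)
    (ξ : (Fin n → ℝ) → Fin n → ℝ) (hξ : ContDiff ℝ (⊤ : ℕ∞) ξ) (hξc : HasCompactSupport ξ) :
    ∫ x, ((∑ i, x i * ξ x i) - (∑ i, jac ξ x i i) + ∑ i, grad f x i * ξ x i) ^ 2 ∂ρ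
      = ∫ x, ((∑ i, ξ x i ^ 2) + (∑ i, (hess f x).mulVec (ξ x) i * ξ x i)
          + Matrix.trace (jac ξ x * jac ξ x)) ∂ρ := by
  classical
  subst hρ
  rw [integral_rho hf.continuous, integral_rho hf.continuous]
  -- notation
  set F : (Fin n → ℝ) → ℝ := Df f with hFdef
  set d : (Fin n → ℝ) → ℝ := fun x =>
    (∑ i, x i * ξ x i) - (∑ i, jac ξ x i i) + ∑ i, grad f x i * ξ x i with hddef
  set P : Fin n → Fin n → (Fin n → ℝ) → ℝ :=
    fun i j x => fderiv ℝ (fun y => ξ y j) x (Pi.single i 1) with hPdef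
  set S : Fin n → Fin n → (Fin n → ℝ) → ℝ :=
    fun i j x => fderiv ℝ (fun y => P j j y) x (Pi.single i 1) with hSdef
  -- regularity facts
  have hxic : ∀ i, ContDiff ℝ (⊤ : ℕ∞) fun x => ξ x i := fun i =>
    ((ContinuousLinearMap.proj i : (Fin n → ℝ) →L[ℝ] ℝ).contDiff).comp hξ
  have hxicpt : ∀ i, HasCompactSupport fun x => ξ x i := fun i =>
    hξc.comp_left (g := fun v : Fin n → ℝ => v i) rfl
  have hPcd : ∀ i j, ContDiff ℝ (⊤ : ℕ∞) (P i j) := fun i j => contDiff_pd (hxic j) _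
  have hPcpt : ∀ i j, HasCompactSupport (P i j) := fun i j => cpt_pd (hxicpt j) _
  have hScd : ∀ i j, ContDiff ℝ (⊤ : ℕ∞) (S i j) := fun i j => contDiff_pd (hPcd j j) _
  have hScpt : ∀ i j, HasCompactSupport (S i j) := fun i j => cpt_pd (hPcpt j j) _
  have hgrad1 : ∀ j, ContDiff ℝ 1 fun x => grad f x j := fun j =>
    (hf.fderiv_right (m := 1) (by norm_num)).clm_apply contDiff_const
  have hgradc : ∀ j, Continuous fun x => grad f x j := fun j => (hgrad1 j).continuous
  have hhessc : ∀ i j, Continuous fun x => hess f x i j := fun i j =>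
    (((hgrad1 j).fderiv_right (m := 0) (by norm_num)).continuous).clm_apply continuous_const
  have hjac : ∀ (x : Fin n → ℝ) (i j : Fin n), jac ξ x i j = P j i x := fun _ _ _ => rfl
  have hdC1 : ContDiff ℝ 1 d := by
    rw [hddef]
    refine (ContDiff.sub ?_ ?_).add ?_
    · exact ContDiff.sum fun i _ =>
        (((ContinuousLinearMap.proj i : (Fin n → ℝ) →L[ℝ] ℝ).contDiff).mul
          ((hxic i).of_le (by simp)))
    · have h0 : ContDiff ℝ 1 fun x => ∑ i, P i i x :=
        ContDiff.sum fun i _ => ((hPcd i i).of_le (by simp))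
      exact h0
    · exact ContDiff.sum fun i _ => (hgrad1 i).mul ((hxic i).of_le (by simp))
  have hdc : Continuous d := hdC1.continuous
  have hdcpt : HasCompactSupport d := by
    rw [hddef]
    have c1 : HasCompactSupport fun x : Fin n → ℝ => ∑ i, x i * ξ x i :=
      cpt_sum _ _ fun i _ => (hxicpt i).mul_left
    have c2 : HasCompactSupport fun x => ∑ i, jac ξ x i i := by
      have h0 : HasCompactSupport fun x => ∑ i, P i i x :=
        cpt_sum _ _ fun i _ => hPcpt i i
      exact h0
    have c3 : HasCompactSupport fun x => ∑ i, grad f x i * ξ x i :=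
      cpt_sum _ _ fun i _ => (hxicpt i).mul_left
    exact (HasCompactSupport.comp₂_left c1 c2 (sub_zero (0:ℝ))).add c3
  have hPc : ∀ i j, Continuous (P i j) := fun i j => (hPcd i j).continuous
  have hSc : ∀ i j, Continuous (S i j) := fun i j => (hScd i j).continuous
  have hxc : ∀ i, Continuous fun x => ξ x i := fun i => (hxic i).continuous
  have hac : ∀ j, Continuous fun x : Fin n → ℝ => x j + grad f x j := fun j =>
    (continuous_apply j).add (hgradc j)
  -- pointwise identity for d
  have hB : ∀ x, d x = ∑ i, ((x i + grad f x i) * ξ x i - P i i x) := by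
    intro x
    rw [hddef]
    simp only [hjac]
    have h0 : ∀ i : Fin n, (x i + grad f x i) * ξ x i - P i i x
        = (x i * ξ x i - P i i x) + grad f x i * ξ x i := fun i => by ring
    rw [Finset.sum_congr rfl fun i _ => h0 i, Finset.sum_add_distrib,
      Finset.sum_sub_distrib]
  -- step 1: expand d² and integrate term by term
  have hg1C1 : ∀ i, ContDiff ℝ 1 fun x => ξ x i * d x := fun i =>
    ((hxic i).of_le (by simp)).mul hdC1
  have hg1cpt : ∀ i, HasCompactSupport fun x => ξ x i * d x := fun i =>
    (hxicpt i).mul_right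
  have int1 : ∀ i, Integrable (fun x => (ξ x i * d x) * ((x i + grad f x i) * F x)) :=
    fun i => integrable_mulD' hf ((hxc i).mul hdc) ((hxicpt i).mul_right) (hac i)
  have int2 : ∀ i, Integrable (fun x => (P i i x * d x) * F x) := fun i =>
    integrable_mulD hf ((hPc i i).mul hdc) ((hPcpt i i).mul_right)
  have L1 : ∫ x, d x ^ 2 * F x
      = ∑ i, ((∫ x, (ξ x i * d x) * ((x i + grad f x i) * F x))
          - ∫ x, (P i i x * d x) * F x) := by
    have hpt : (fun x => d x ^ 2 * F x)
        = fun x => ∑ i, ((ξ x i * d x) * ((x i + grad f x i) * F x)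
            - (P i i x * d x) * F x) := by
      funext x
      calc d x ^ 2 * F x
          = (∑ i, ((x i + grad f x i) * ξ x i - P i i x)) * (d x * F x) := by
            rw [← hB x]; ring
        _ = _ := by
            rw [Finset.sum_mul]
            exact Finset.sum_congr rfl fun i _ => by ring
    calc ∫ x, d x ^ 2 * F x
        = ∫ x, ∑ i, ((ξ x i * d x) * ((x i + grad f x i) * F x)
            - (P i i x * d x) * F x) := by rw [hpt]
      _ = ∑ i, ∫ x, ((ξ x i * d x) * ((x i + grad f x i) * F x)
            - (P i i x * d x) * F x) :=
          integral_finset_sum _ (fun i _ => (int1 i).sub (int2 i))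
      _ = _ := Finset.sum_congr rfl fun i _ => integral_sub (int1 i) (int2 i)
  -- step 2: first integration by parts
  have int3 : ∀ i, Integrable
      (fun x => fderiv ℝ (fun y => ξ y i * d y) x (Pi.single i 1) * F x) := fun i =>
    integrable_mulD hf
      ((((hg1C1 i).fderiv_right (m := 0) (by norm_num)).continuous).clm_apply
        continuous_const)
      (cpt_pd (hg1cpt i) _)
  have L2 : ∀ i, ∫ x, (ξ x i * d x) * ((x i + grad f x i) * F x)
      = ∫ x, fderiv ℝ (fun y => ξ y i * d y) x (Pi.single i 1) * F x :=
    fun i => (ibp hf (hg1C1 i) (hg1cpt i) i).symm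
  have L3 : ∀ i, (∫ x, fderiv ℝ (fun y => ξ y i * d y) x (Pi.single i 1) * F x)
      - (∫ x, (P i i x * d x) * F x)
      = ∫ x, (ξ x i * fderiv ℝ d x (Pi.single i 1)) * F x := by
    intro i
    calc (∫ x, fderiv ℝ (fun y => ξ y i * d y) x (Pi.single i 1) * F x)
          - (∫ x, (P i i x * d x) * F x)
        = ∫ x, (fderiv ℝ (fun y => ξ y i * d y) x (Pi.single i 1) * F x
            - (P i i x * d x) * F x) := (integral_sub (int3 i) (int2 i)).symm
      _ = _ := by
          congr 1
          funext x
          rw [pd_mul (((hxic i).differentiable (by simp)) x) ((hdC1.differentiable one_ne_zero) x)]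
          ring
  -- step 3: expand the derivative of d
  have hDd : ∀ (x : Fin n → ℝ) (i : Fin n), fderiv ℝ d x (Pi.single i 1)
      = ∑ j, (((if j = i then 1 else 0) + hess f x i j) * ξ x j
          + (x j + grad f x j) * P i j x - S i j x) := by
    intro x i
    have hdiff1 : ∀ j : Fin n, DifferentiableAt ℝ (fun y : Fin n → ℝ => y j * ξ y j) x :=
      fun j => ((hasFDerivAt_apply j x).differentiableAt).mul
        (((hxic j).differentiable (by simp)) x)
    have hdiff2 : ∀ j : Fin n, DifferentiableAt ℝ (fun y => P j j y) x :=
      fun j => ((hPcd j j).differentiable (by simp)) x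
    have hdiff3 : ∀ j : Fin n, DifferentiableAt ℝ (fun y : Fin n → ℝ => grad f y j * ξ y j) x :=
      fun j => (((hgrad1 j).differentiable one_ne_zero) x).mul (((hxic j).differentiable (by simp)) x)
    have e1 : d = fun y => (((∑ j, y j * ξ y j) - ∑ j, P j j y) + ∑ j, grad f y j * ξ y j) := by
      funext y
      rw [hddef]
      simp only [hjac]
    rw [e1]
    have hA : DifferentiableAt ℝ (fun y : Fin n → ℝ => ∑ j, y j * ξ y j) x :=
      DifferentiableAt.fun_sum fun j _ => hdiff1 j
    have hBd : DifferentiableAt ℝ (fun y => ∑ j, P j j y) x :=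
      DifferentiableAt.fun_sum fun j _ => hdiff2 j
    have hC : DifferentiableAt ℝ (fun y : Fin n → ℝ => ∑ j, grad f y j * ξ y j) x :=
      DifferentiableAt.fun_sum fun j _ => hdiff3 j
    rw [fderiv_fun_add (hA.fun_sub hBd) hC, ContinuousLinearMap.add_apply,
      fderiv_fun_sub hA hBd, ContinuousLinearMap.sub_apply]
    rw [pd_sum (fun j _ => hdiff1 j), pd_sum (fun j _ => hdiff2 j),
      pd_sum (fun j _ => hdiff3 j)]
    rw [← Finset.sum_sub_distrib, ← Finset.sum_add_distrib]
    refine Finset.sum_congr rfl fun j _ => ?_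
    rw [pd_mul ((hasFDerivAt_apply j x).differentiableAt) (((hxic j).differentiable (by simp)) x)]
    rw [pd_mul (((hgrad1 j).differentiable one_ne_zero) x) (((hxic j).differentiable (by simp)) x)]
    rw [pd_proj]
    have hhess : fderiv ℝ (fun y => grad f y j) x (Pi.single i 1) = hess f x i j := rfl
    have hPe : fderiv ℝ (fun y : Fin n → ℝ => ξ y j) x (Pi.single i 1) = P i j x := rfl
    have hSe : fderiv ℝ (fun y => P j j y) x (Pi.single i 1) = S i j x := rfl
    rw [hhess, hPe, hSe]
    ring
  -- integrability of the various pieces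
  have intT1 : ∀ i j, Integrable
      (fun x => (((if j = i then (1:ℝ) else 0) + hess f x i j) * (ξ x i * ξ x j)) * F x) :=
    fun i j => integrable_mulD hf
      ((continuous_const.add (hhessc i j)).mul ((hxc i).mul (hxc j)))
      (((hxicpt i).mul_right).mul_left)
  have intT2 : ∀ i j, Integrable
      (fun x => (ξ x i * P i j x) * ((x j + grad f x j) * F x)) := fun i j =>
    integrable_mulD' hf ((hxc i).mul (hPc i j)) ((hxicpt i).mul_right) (hac j)
  have intT3 : ∀ i j, Integrable (fun x => (ξ x i * S i j x) * F x) := fun i j =>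
    integrable_mulD hf ((hxc i).mul (hSc i j)) ((hxicpt i).mul_right)
  have intPP : ∀ i j, Integrable (fun x => (P j i x * P i j x) * F x) := fun i j =>
    integrable_mulD hf ((hPc j i).mul (hPc i j)) ((hPcpt j i).mul_right)
  -- step 4: expand ∫ ξᵢ ∂ᵢd F into a double sum
  have L4 : ∀ i, ∫ x, (ξ x i * fderiv ℝ d x (Pi.single i 1)) * F x
      = ∑ j, ((∫ x, (((if j = i then (1:ℝ) else 0) + hess f x i j) * (ξ x i * ξ x j)) * F x)
          + ((∫ x, (ξ x i * P i j x) * ((x j + grad f x j) * F x))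
            - ∫ x, (ξ x i * S i j x) * F x)) := by
    intro i
    have hpt : (fun x => (ξ x i * fderiv ℝ d x (Pi.single i 1)) * F x)
        = fun x => ∑ j, ((((if j = i then (1:ℝ) else 0) + hess f x i j) * (ξ x i * ξ x j)) * F x
            + ((ξ x i * P i j x) * ((x j + grad f x j) * F x)
              - (ξ x i * S i j x) * F x)) := by
      funext x
      rw [hDd x i]
      rw [Finset.mul_sum, Finset.sum_mul]
      exact Finset.sum_congr rfl fun j _ => by ring
    calc ∫ x, (ξ x i * fderiv ℝ d x (Pi.single i 1)) * F x
        = ∫ x, ∑ j, ((((if j = i then (1:ℝ) else 0) + hess f x i j) * (ξ x i * ξ x j)) * F x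
            + ((ξ x i * P i j x) * ((x j + grad f x j) * F x)
              - (ξ x i * S i j x) * F x)) := by rw [hpt]
      _ = ∑ j, ∫ x, ((((if j = i then (1:ℝ) else 0) + hess f x i j) * (ξ x i * ξ x j)) * F x
            + ((ξ x i * P i j x) * ((x j + grad f x j) * F x)
              - (ξ x i * S i j x) * F x)) :=
          integral_finset_sum _ (fun j _ => (intT1 i j).add ((intT2 i j).sub (intT3 i j)))
      _ = _ := by
          refine Finset.sum_congr rfl fun j _ => ?_
          have hsub : Integrable (fun x => (ξ x i * P i j x) * ((x j + grad f x j) * F x)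
              - (ξ x i * S i j x) * F x) volume := (intT2 i j).sub (intT3 i j)
          rw [integral_add (intT1 i j) hsub, integral_sub (intT2 i j) (intT3 i j)]
  -- step 5: second integration by parts
  have hg2C1 : ∀ i j, ContDiff ℝ 1 fun x => ξ x i * P i j x := fun i j =>
    ((hxic i).of_le (by simp)).mul ((hPcd i j).of_le (by simp))
  have hg2cpt : ∀ i j, HasCompactSupport fun x => ξ x i * P i j x := fun i j =>
    (hxicpt i).mul_right
  have int5 : ∀ i j, Integrable
      (fun x => fderiv ℝ (fun y => ξ y i * P i j y) x (Pi.single j 1) * F x) := fun i j =>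
    integrable_mulD hf
      ((((hg2C1 i j).fderiv_right (m := 0) (by norm_num)).continuous).clm_apply
        continuous_const)
      (cpt_pd (hg2cpt i j) _)
  have L5 : ∀ i j, ∫ x, (ξ x i * P i j x) * ((x j + grad f x j) * F x)
      = (∫ x, (P j i x * P i j x) * F x) + ∫ x, (ξ x i * S i j x) * F x := by
    intro i j
    calc ∫ x, (ξ x i * P i j x) * ((x j + grad f x j) * F x)
        = ∫ x, fderiv ℝ (fun y => ξ y i * P i j y) x (Pi.single j 1) * F x :=
          (ibp hf (hg2C1 i j) (hg2cpt i j) j).symm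
      _ = ∫ x, ((P j i x * P i j x) * F x + (ξ x i * S i j x) * F x) := by
          congr 1
          funext x
          rw [pd_mul (((hxic i).differentiable (by simp)) x)
            (((hPcd i j).differentiable (by simp)) x)]
          have hsymm : fderiv ℝ (fun y => P i j y) x (Pi.single j 1) = S i j x := by
            have h0 := pd_symm (hxic j) x i j
            exact h0
          have hPe : fderiv ℝ (fun y : Fin n → ℝ => ξ y i) x (Pi.single j 1) = P j i x := rfl
          rw [hsymm, hPe]
          ring
      _ = _ := integral_add (intPP i j) (intT3 i j)
  -- left-hand side as a double sum
  have LHS : ∫ x, d x ^ 2 * F x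
      = ∑ i, ∑ j,
        ((∫ x, (((if j = i then (1:ℝ) else 0) + hess f x i j) * (ξ x i * ξ x j)) * F x)
          + ∫ x, (P j i x * P i j x) * F x) := by
    rw [L1]
    refine Finset.sum_congr rfl fun i _ => ?_
    rw [L2 i, L3 i, L4 i]
    refine Finset.sum_congr rfl fun j _ => ?_
    rw [L5 i j]
    ring
  -- right-hand side as the same double sum
  have RHS : ∫ x, ((∑ i, ξ x i ^ 2) + (∑ i, (hess f x).mulVec (ξ x) i * ξ x i)
        + Matrix.trace (jac ξ x * jac ξ x)) * F x
      = ∑ i, ∑ j,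
        ((∫ x, (((if j = i then (1:ℝ) else 0) + hess f x i j) * (ξ x i * ξ x j)) * F x)
          + ∫ x, (P j i x * P i j x) * F x) := by
    have hpt : (fun x => ((∑ i, ξ x i ^ 2) + (∑ i, (hess f x).mulVec (ξ x) i * ξ x i)
          + Matrix.trace (jac ξ x * jac ξ x)) * F x)
        = fun x => ∑ i, ∑ j,
            ((((if j = i then (1:ℝ) else 0) + hess f x i j) * (ξ x i * ξ x j)) * F x
              + (P j i x * P i j x) * F x) := by
      funext x
      have h1 : ∑ i, ξ x i ^ 2
          = ∑ i : Fin n, ∑ j : Fin n, (if j = i then (1:ℝ) else 0) * (ξ x i * ξ x j) := by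
        refine Finset.sum_congr rfl fun i _ => ?_
        simp [ite_mul, sq]
      have h2 : ∑ i, (hess f x).mulVec (ξ x) i * ξ x i
          = ∑ i : Fin n, ∑ j : Fin n, hess f x i j * (ξ x i * ξ x j) := by
        refine Finset.sum_congr rfl fun i _ => ?_
        rw [Matrix.mulVec, dotProduct, Finset.sum_mul]
        exact Finset.sum_congr rfl fun j _ => by ring
      have h3 : Matrix.trace (jac ξ x * jac ξ x)
          = ∑ i : Fin n, ∑ j : Fin n, P j i x * P i j x := by
        rw [Matrix.trace]
        refine Finset.sum_congr rfl fun i _ => ?_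
        rw [Matrix.diag, Matrix.mul_apply]
        refine Finset.sum_congr rfl fun j _ => ?_
        rw [hjac, hjac]
      calc ((∑ i, ξ x i ^ 2) + (∑ i, (hess f x).mulVec (ξ x) i * ξ x i)
            + Matrix.trace (jac ξ x * jac ξ x)) * F x
          = ((∑ i : Fin n, ∑ j : Fin n, (if j = i then (1:ℝ) else 0) * (ξ x i * ξ x j))
              + (∑ i : Fin n, ∑ j : Fin n, hess f x i j * (ξ x i * ξ x j))
              + ∑ i : Fin n, ∑ j : Fin n, P j i x * P i j x) * F x := by
            rw [h1, h2, h3]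
        _ = ∑ i : Fin n, ∑ j : Fin n,
              (((if j = i then (1:ℝ) else 0) * (ξ x i * ξ x j))
                + hess f x i j * (ξ x i * ξ x j) + P j i x * P i j x) * F x := by
            rw [← Finset.sum_add_distrib, ← Finset.sum_add_distrib, Finset.sum_mul]
            refine Finset.sum_congr rfl fun i _ => ?_
            rw [← Finset.sum_add_distrib, ← Finset.sum_add_distrib, Finset.sum_mul]
        _ = _ := by
            refine Finset.sum_congr rfl fun i _ => Finset.sum_congr rfl fun j _ => by ring
    calc ∫ x, ((∑ i, ξ x i ^ 2) + (∑ i, (hess f x).mulVec (ξ x) i * ξ x i)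
          + Matrix.trace (jac ξ x * jac ξ x)) * F x
        = ∫ x, ∑ i, ∑ j,
            ((((if j = i then (1:ℝ) else 0) + hess f x i j) * (ξ x i * ξ x j)) * F x
              + (P j i x * P i j x) * F x) := by rw [hpt]
      _ = ∑ i, ∫ x, ∑ j,
            ((((if j = i then (1:ℝ) else 0) + hess f x i j) * (ξ x i * ξ x j)) * F x
              + (P j i x * P i j x) * F x) :=
          integral_finset_sum _ (fun i _ =>
            integrable_finset_sum _ (fun j _ => (intT1 i j).add (intPP i j)))
      _ = ∑ i, ∑ j, ∫ x,
            ((((if j = i then (1:ℝ) else 0) + hess f x i j) * (ξ x i * ξ x j)) * F x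
              + (P j i x * P i j x) * F x) :=
          Finset.sum_congr rfl fun i _ =>
            integral_finset_sum _ (fun j _ => (intT1 i j).add (intPP i j))
      _ = _ := Finset.sum_congr rfl fun i _ => Finset.sum_congr rfl fun j _ =>
            integral_add (intT1 i j) (intPP i j)
  rw [LHS, ← RHS]
end

section
/- Let f, g : ℝ^n → ℝ be measurable functions such that ρ = e^{−f}·β and ν = e^{−g}·β are probability measures. Let φ : ℝ^n → ℝ be a C² function such that x ↦ |x|²/2 + φ(x) is convex, the matrix I + Hess φ(x) is invertible for every x, and the map T = id + ∇φ pushes ρ forward to ν. Then φ solves the Gaussian Monge–Ampère equation: for ρ-a.e. x, e^{−f(x)} = e^{−g(T(x))}·det(I + Hess φ(x))·exp(−⟨x, ∇φ(x)⟩ − |∇φ(x)|²/2). Equivalently, with det₂(I + A) := det(I + A)·e^{−trace(A)} and (Lφ)(x) = ⟨x, ∇φ(x)⟩ − Δφ(x), one has e^{−f} = e^{−g∘T}·det₂(I + Hess φ)·exp(−Lφ − |∇φ|²/2) ρ-a.e. -/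
open MeasureTheory Real Filter Topology

/-! The map `T = id + ∇φ` is the gradient of `ψ = |x|²/2 + φ`, with derivative `I + Hess φ`.
Convexity of `ψ` makes `I + Hess φ` positive semidefinite along every line, hence positive
definite since it is invertible, so `T` is injective and `det (I + Hess φ) > 0`. The change of
variables formula then turns `T_* ρ = ν` into the Lebesgue-a.e. identity of densities
`γ e^{-f} = det (I + Hess φ) · (γ e^{-g}) ∘ T`, where `γ` is the Gaussian density, and
`γ (x + y) = γ x · exp (-⟨x, y⟩ - |y|²/2)`. -/

open Matrix
open scoped ENNReal

section Calculus

variable {n : ℕ} {φ : (Fin n → ℝ) → ℝ}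

theorem differentiable_grad_apply (hφ : ContDiff ℝ 2 φ) (j : Fin n) :
    Differentiable ℝ fun y => grad φ y j :=
  fun x => ((hφ.fderiv_right le_rfl).differentiable one_ne_zero x).clm_apply
    (differentiableAt_const _)

theorem hasFDerivAt_grad (hφ : ContDiff ℝ 2 φ) (x : Fin n → ℝ) :
    HasFDerivAt (grad φ) (LinearMap.toContinuousLinearMap (toLin' (hess φ x)ᵀ)) x := by
  refine hasFDerivAt_pi'.2 fun j => ?_
  refine (differentiable_grad_apply hφ j x).hasFDerivAt.congr_fderiv ?_
  refine ContinuousLinearMap.coe_injective (LinearMap.pi_ext fun i c => ?_)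
  rw [show (Pi.single i c : Fin n → ℝ) = c • Pi.single i 1 by ext; simp [Pi.single_apply]]
  simp [hess]

theorem hess_apply (hφ : ContDiff ℝ 2 φ) (x : Fin n → ℝ) (i j : Fin n) :
    hess φ x i j = fderiv ℝ (fderiv ℝ φ) x (Pi.single i 1) (Pi.single j 1) := by
  have hd : DifferentiableAt ℝ (fderiv ℝ φ) x :=
    (hφ.fderiv_right le_rfl).differentiable one_ne_zero x
  simp only [hess, grad, Matrix.of_apply]
  rw [fderiv_clm_apply hd (differentiableAt_const _)]
  simp

theorem hess_transpose (hφ : ContDiff ℝ 2 φ) (x : Fin n → ℝ) : (hess φ x)ᵀ = hess φ x := by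
  ext i j
  rw [transpose_apply, hess_apply hφ, hess_apply hφ]
  exact ((hφ.contDiffAt).isSymmSndFDerivAt (by simp) _ _)

theorem fderiv_apply_eq_grad_dotProduct (φ : (Fin n → ℝ) → ℝ) (x v : Fin n → ℝ) :
    fderiv ℝ φ x v = grad φ x ⬝ᵥ v := by
  conv_lhs => rw [pi_eq_sum_univ' v]
  simp [grad, dotProduct, mul_comm]

theorem hasFDerivAt_id_add_grad (hφ : ContDiff ℝ 2 φ) (x : Fin n → ℝ) :
    HasFDerivAt (fun y => y + grad φ y)
      (LinearMap.toContinuousLinearMap (toLin' (1 + hess φ x))) x := by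
  refine ((hasFDerivAt_id x).add (hasFDerivAt_grad hφ x)).congr_fderiv ?_
  rw [hess_transpose hφ, map_add, toLin'_one, map_add]
  rfl

end Calculus

section Line

variable {n : ℕ}

theorem hasDerivAt_const_add_smul (x v : Fin n → ℝ) (t : ℝ) :
    HasDerivAt (fun s : ℝ => x + s • v) v t := by
  simpa using ((hasDerivAt_id t).smul_const v).const_add x

theorem hasDerivAt_dotProduct_comp_line {T : (Fin n → ℝ) → Fin n → ℝ}
    {M : (Fin n → ℝ) → Matrix (Fin n) (Fin n) ℝ}
    (hT : ∀ y, HasFDerivAt T (LinearMap.toContinuousLinearMap (toLin' (M y))) y)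
    (x v : Fin n → ℝ) (t : ℝ) :
    HasDerivAt (fun s => T (x + s • v) ⬝ᵥ v) (M (x + t • v) *ᵥ v ⬝ᵥ v) t := by
  have hTline := hasDerivAt_pi.1 ((hT _).comp_hasDerivAt t (hasDerivAt_const_add_smul x v t))
  exact HasDerivAt.fun_sum fun i _ => (hTline i).mul_const (v i)

theorem hasDerivAt_sqNorm_half_comp_line (x v : Fin n → ℝ) (t : ℝ) :
    HasDerivAt (fun s => (∑ i, (x + s • v) i ^ 2) / 2) ((x + t • v) ⬝ᵥ v) t := by
  have hline := hasDerivAt_pi.1 (hasDerivAt_const_add_smul x v t)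
  refine ((HasDerivAt.fun_sum fun i _ => (hline i).pow 2).div_const 2).congr_deriv ?_
  simp only [dotProduct, Finset.sum_div]
  exact Finset.sum_congr rfl fun i _ => by ring

theorem injective_of_hasFDerivAt_posDef {T : (Fin n → ℝ) → Fin n → ℝ}
    {M : (Fin n → ℝ) → Matrix (Fin n) (Fin n) ℝ}
    (hT : ∀ y, HasFDerivAt T (LinearMap.toContinuousLinearMap (toLin' (M y))) y)
    (hM : ∀ y, (M y).PosDef) : Function.Injective T := by
  intro a b hab
  by_contra hne
  have hv : b - a ≠ 0 := sub_ne_zero.2 (Ne.symm hne)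
  have hmono : StrictMono fun s : ℝ => T (a + s • (b - a)) ⬝ᵥ (b - a) :=
    strictMono_of_hasDerivAt_pos (hasDerivAt_dotProduct_comp_line hT a (b - a)) fun t => by
      simpa [dotProduct_comm] using (hM (a + t • (b - a))).dotProduct_mulVec_pos hv
  simpa [hab] using hmono zero_lt_one

end Line

theorem ConvexOn.nonneg_of_hasDerivAt_deriv {g g' : ℝ → ℝ} (hg : ConvexOn ℝ Set.univ g)
    (hg' : ∀ s, HasDerivAt g (g' s) s) {d t : ℝ} (hd : HasDerivAt g' d t) : 0 ≤ d := by
  have hmono : Monotone g' := fun a b hab => by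
    simpa only [(hg' a).deriv, (hg' b).deriv] using
      hg.monotoneOn_deriv (fun s _ => (hg' s).differentiableAt) trivial trivial hab
  simpa only [hd.deriv] using hmono.deriv_nonneg (x := t)

theorem ConvexOn.comp_line {n : ℕ} {ψ : (Fin n → ℝ) → ℝ} (hψ : ConvexOn ℝ Set.univ ψ)
    (x v : Fin n → ℝ) : ConvexOn ℝ Set.univ fun s : ℝ => ψ (x + s • v) := by
  simpa [Function.comp_def, AffineMap.lineMap_apply_module', add_comm] using
    hψ.comp_affineMap (AffineMap.lineMap x (x + v))

section Convexity

variable {n : ℕ} {φ : (Fin n → ℝ) → ℝ}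

theorem posSemidef_one_add_hess (hφ : ContDiff ℝ 2 φ)
    (hconv : ConvexOn ℝ Set.univ fun x => (∑ i, x i ^ 2) / 2 + φ x) (x : Fin n → ℝ) :
    (1 + hess φ x).PosSemidef := by
  have hsymm : (1 + hess φ x).IsHermitian := by
    simp [IsHermitian, transpose_add, hess_transpose hφ]
  refine posSemidef_iff_dotProduct_mulVec.2 ⟨hsymm, fun v => ?_⟩
  have hψ' (t : ℝ) : HasDerivAt (fun s => (∑ i, (x + s • v) i ^ 2) / 2 + φ (x + s • v))
      ((x + t • v + grad φ (x + t • v)) ⬝ᵥ v) t := by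
    have hφline := ((hφ.differentiable two_ne_zero) (x + t • v)).hasFDerivAt.comp_hasDerivAt t
      (hasDerivAt_const_add_smul x v t)
    rw [add_dotProduct, ← fderiv_apply_eq_grad_dotProduct]
    exact (hasDerivAt_sqNorm_half_comp_line x v t).add hφline
  simpa [dotProduct_comm] using (hconv.comp_line x v).nonneg_of_hasDerivAt_deriv hψ'
    (hasDerivAt_dotProduct_comp_line (hasFDerivAt_id_add_grad hφ) x v 0)

theorem posDef_one_add_hess (hφ : ContDiff ℝ 2 φ)
    (hconv : ConvexOn ℝ Set.univ fun x => (∑ i, x i ^ 2) / 2 + φ x)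
    (hinv : ∀ x, IsUnit (1 + hess φ x)) (x : Fin n → ℝ) : (1 + hess φ x).PosDef :=
  (posSemidef_one_add_hess hφ hconv x).posDef_iff_isUnit.2 (hinv x)

theorem injective_id_add_grad (hφ : ContDiff ℝ 2 φ)
    (hconv : ConvexOn ℝ Set.univ fun x => (∑ i, x i ^ 2) / 2 + φ x)
    (hinv : ∀ x, IsUnit (1 + hess φ x)) : Function.Injective fun x => x + grad φ x :=
  injective_of_hasFDerivAt_posDef (hasFDerivAt_id_add_grad hφ) (posDef_one_add_hess hφ hconv hinv)

end Convexity

theorem ae_eq_abs_det_mul_comp_of_map_withDensity {E : Type*} [NormedAddCommGroup E]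
    [NormedSpace ℝ E] [FiniteDimensional ℝ E] [MeasurableSpace E] [BorelSpace E]
    (μ : Measure E) [μ.IsAddHaarMeasure] {T : E → E} {T' : E → E →L[ℝ] E}
    (hT' : ∀ x, HasFDerivAt T (T' x) x) (hT : Function.Injective T) {F G : E → ℝ≥0∞}
    (hF : AEMeasurable F μ) (hG : Measurable G)
    (hpush : (μ.withDensity F).map T = μ.withDensity G) :
    F =ᵐ[μ] fun x => ENNReal.ofReal |(T' x).det| * G (T x) := by
  have hT'within (s : Set E) : ∀ x ∈ s, HasFDerivWithinAt T (T' x) s x :=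
    fun x _ => (hT' x).hasFDerivWithinAt
  have hTmeas : Measurable T :=
    (continuous_iff_continuousAt.2 fun x => (hT' x).continuousAt).measurable
  have hdet : AEMeasurable (fun x => ENNReal.ofReal |(T' x).det|) μ := by
    simpa using aemeasurable_ofReal_abs_det_fderivWithin μ MeasurableSet.univ (hT'within _)
  refine ae_eq_of_forall_setLIntegral_eq_of_sigmaFinite₀ hF
    (hdet.mul (hG.comp hTmeas).aemeasurable) fun s hs _ => ?_
  have hTs : MeasurableSet (T '' s) := measurable_image_of_fderivWithin hs (hT'within s) hT.injOn
  calc ∫⁻ x in s, F x ∂μ = (μ.withDensity F).map T (T '' s) := by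
        rw [Measure.map_apply hTmeas hTs, Set.preimage_image_eq s hT, withDensity_apply _ hs]
    _ = ∫⁻ y in T '' s, G y ∂μ := by rw [hpush, withDensity_apply _ hTs]
    _ = _ := lintegral_image_eq_lintegral_abs_det_fderiv_mul μ hs (hT'within s) hT.injOn G

section Gaussian

variable {n : ℕ}

theorem stdGaussian_withDensity {F : (Fin n → ℝ) → ℝ≥0∞} (hF : Measurable F) :
    (stdGaussian n).withDensity F = volume.withDensity fun x =>
      ENNReal.ofReal ((2 * π) ^ (-(n : ℝ) / 2) * Real.exp (-(∑ i, x i ^ 2) / 2)) * F x := by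
  rw [stdGaussian, ← withDensity_mul _ (by fun_prop) hF]
  rfl

theorem exp_neg_sum_sq_add_div_two (x y : Fin n → ℝ) :
    Real.exp (-(∑ i, (x + y) i ^ 2) / 2)
      = Real.exp (-(∑ i, x i ^ 2) / 2) * Real.exp (-(∑ i, x i * y i) - (∑ i, y i ^ 2) / 2) := by
  rw [← Real.exp_add]
  congr 1
  simp only [Pi.add_apply, add_sq, Finset.sum_add_distrib, mul_assoc, ← Finset.mul_sum]
  ring

end Gaussian

theorem monge_ampere_forward_general (n : ℕ)
    (f g φ : (Fin n → ℝ) → ℝ) (hf : Measurable f) (hg : Measurable g)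
    (hφ : ContDiff ℝ 2 φ)
    (ρ ν : Measure (Fin n → ℝ))
    (hρ : ρ = (stdGaussian n).withDensity fun x => ENNReal.ofReal (Real.exp (-f x)))
    (hν : ν = (stdGaussian n).withDensity fun x => ENNReal.ofReal (Real.exp (-g x)))
    (hconv : ConvexOn ℝ Set.univ fun x => (∑ i, x i ^ 2) / 2 + φ x)
    (hinv : ∀ x, IsUnit (1 + hess φ x))
    (hpush : Measure.map (fun x => x + grad φ x) ρ = ν) :
    ∀ᵐ x ∂ρ, Real.exp (-f x)
      = Real.exp (-g (x + grad φ x)) * (1 + hess φ x).det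
        * Real.exp (-(∑ i, x i * grad φ x i) - (∑ i, grad φ x i ^ 2) / 2) := by
  rw [hρ, stdGaussian_withDensity (by fun_prop)] at hpush ⊢
  rw [hν, stdGaussian_withDensity (by fun_prop)] at hpush
  have hdensity := ae_eq_abs_det_mul_comp_of_map_withDensity volume (hasFDerivAt_id_add_grad hφ)
    (injective_id_add_grad hφ hconv hinv) (by fun_prop) (by fun_prop) hpush
  filter_upwards [(withDensity_absolutelyContinuous _ _).ae_le hdensity] with x hx
  have hdet := (posDef_one_add_hess hφ hconv hinv x).det_pos
  rw [ContinuousLinearMap.det, LinearMap.coe_toContinuousLinearMap, LinearMap.det_toLin',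
    abs_of_pos hdet, exp_neg_sum_sq_add_div_two] at hx
  rw [← ENNReal.ofReal_mul (by positivity), ← ENNReal.ofReal_mul (by positivity),
    ← ENNReal.ofReal_mul hdet.le, ENNReal.ofReal_eq_ofReal_iff (by positivity) (by positivity)]
    at hx
  have hw : 0 < (2 * π) ^ (-(n : ℝ) / 2) * Real.exp (-(∑ i, x i ^ 2) / 2) := by positivity
  refine mul_left_cancel₀ hw.ne' (hx.trans ?_)
  ring

/-- The forward Monge potential `φ` solves the Gaussian
Monge–Ampère equation: for `ρ`-a.e. `x`,
`e^{−f(x)} = e^{−g(T(x))}·det(I + Hess φ(x))·exp(−⟨x, ∇φ(x)⟩ − |∇φ(x)|²/2)`,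
where `T = id + ∇φ` pushes `ρ = e^{−f}·β` forward to `ν = e^{−g}·β`. -/
theorem monge_ampere_forward (n : ℕ)
    (f g φ : (Fin n → ℝ) → ℝ) (hf : Measurable f) (hg : Measurable g)
    (hφ : ContDiff ℝ 2 φ)
    (ρ ν : Measure (Fin n → ℝ))
    (hρ : ρ = (stdGaussian n).withDensity fun x => ENNReal.ofReal (Real.exp (-f x)))
    (hν : ν = (stdGaussian n).withDensity fun x => ENNReal.ofReal (Real.exp (-g x)))
    (hρprob : IsProbabilityMeasure ρ) (hνprob : IsProbabilityMeasure ν)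
    (hconv : ConvexOn ℝ Set.univ fun x => (∑ i, x i ^ 2) / 2 + φ x)
    (hinv : ∀ x, IsUnit (1 + hess φ x))
    (hpush : Measure.map (fun x => x + grad φ x) ρ = ν) :
    ∀ᵐ x ∂ρ, Real.exp (-f x)
      = Real.exp (-g (x + grad φ x)) * (1 + hess φ x).det
        * Real.exp (-(∑ i, x i * grad φ x i) - (∑ i, grad φ x i ^ 2) / 2) :=
  monge_ampere_forward_general n f g φ hf hg hφ ρ ν hρ hν hconv hinv hpush
end

section
/- Let u : ℝ^n → (0,∞) be a bounded C¹ function with bounded gradient and let t > 0. Then the Fisher information contracts under the Ornstein–Uhlenbeck semigroup: ∫ |∇(Q_t u)(x)|² / (Q_t u)(x) dβ(x) ≤ e^{−2t} ∫ |∇u(x)|² / u(x) dβ(x), as an inequality in [0, ∞]. -/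
open MeasureTheory Real Filter Topology

/-- The Ornstein–Uhlenbeck semigroup on `ℝ^n`:
`(Q_t u)(x) = ∫ u(e^{−t}x + √(1−e^{−2t}) y) dβ(y)`. -/
noncomputable def ouSemigroup (n : ℕ) (t : ℝ) (u : (Fin n → ℝ) → ℝ)
    (x : Fin n → ℝ) : ℝ :=
  ∫ y, u (Real.exp (-t) • x + Real.sqrt (1 - Real.exp (-2 * t)) • y) ∂(stdGaussian n)

/-! Write `Q_t u (x) = 𝔼 u(a x + s Y)` with `a = e^{-t}`, `s = √(1 - e^{-2t})` and `Y ~ β`.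
Differentiating under the integral gives `∇(Q_t u)(x) = a 𝔼 ∇u(a x + s Y)`, and the Cauchy–Schwarz
inequality `(𝔼 V)² ≤ 𝔼 (V²/g) 𝔼 g` with weight `g = u(a x + s Y)` bounds the integrand of the
left-hand side by `a² 𝔼 [|∇u|²/u](a x + s Y)`. Integrating in `x` against `β`, the right-hand side
becomes `a² ∫ |∇u|²/u dβ`, because `a X + s Y ~ β` for independent `X, Y ~ β` when `a² + s² = 1`:
coordinatewise, this is the convolution identity `N(0, a²) ∗ N(0, s²) = N(0, 1)`. -/

-- Opening all of `ProbabilityTheory` would clash with Mathlib's `ProbabilityTheory.stdGaussian`.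
open ProbabilityTheory (gaussianReal gaussianPDFReal gaussianPDFReal_nonneg
  integrable_gaussianPDFReal gaussianReal_apply_eq_integral gaussianReal_map_const_mul
  gaussianReal_conv_gaussianReal)

lemma stdGaussian_density_eq_prod (n : ℕ) (x : Fin n → ℝ) :
    (2 * π) ^ (-(n : ℝ) / 2) * Real.exp (-(∑ i, x i ^ 2) / 2)
      = ∏ i, gaussianPDFReal 0 1 (x i) := by
  simp only [gaussianPDFReal, NNReal.coe_one, mul_one, sub_zero, Finset.prod_mul_distrib,
    Finset.prod_const, Finset.card_univ, Fintype.card_fin, ← Real.exp_sum, Finset.sum_div,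
    Finset.sum_neg_distrib, neg_div]
  congr 1
  rw [Real.sqrt_eq_rpow, ← Real.rpow_neg_one, ← Real.rpow_mul (by positivity),
    ← Real.rpow_natCast, ← Real.rpow_mul (by positivity)]
  congr 1
  ring

theorem stdGaussian_eq_pi (n : ℕ) : stdGaussian n = Measure.pi fun _ => gaussianReal 0 1 := by
  have hint : Integrable (fun x : Fin n → ℝ => ∏ i, gaussianPDFReal 0 1 (x i)) :=
    Integrable.fintype_prod fun _ => integrable_gaussianPDFReal 0 1
  refine (Measure.pi_eq fun s hs => ?_).symm
  simp_rw [stdGaussian, withDensity_apply _ (MeasurableSet.univ_pi hs),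
    stdGaussian_density_eq_prod, gaussianReal_apply_eq_integral 0 one_ne_zero]
  rw [← ofReal_integral_eq_lintegral_ofReal hint.integrableOn
      (ae_of_all _ fun x => Finset.prod_nonneg fun i _ => gaussianPDFReal_nonneg 0 1 (x i)),
    volume_pi, Measure.restrict_pi_pi,
    integral_fintype_prod_eq_prod (fun _ => gaussianPDFReal 0 1),
    ENNReal.ofReal_prod_of_nonneg fun i _ => setIntegral_nonneg (hs i)
      fun x _ => gaussianPDFReal_nonneg 0 1 x]

instance isProbabilityMeasure_stdGaussian (n : ℕ) : IsProbabilityMeasure (stdGaussian n) := by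
  rw [stdGaussian_eq_pi]
  infer_instance

theorem gaussianReal_map_mul_add_mul {a s : ℝ} (has : a ^ 2 + s ^ 2 = 1) :
    ((gaussianReal 0 1).prod (gaussianReal 0 1)).map (fun p => a * p.1 + s * p.2)
      = gaussianReal 0 1 := by
  calc ((gaussianReal 0 1).prod (gaussianReal 0 1)).map (fun p => a * p.1 + s * p.2)
      = ((gaussianReal 0 1).map (a * ·)) ∗ ((gaussianReal 0 1).map (s * ·)) := by
        rw [Measure.conv, Measure.map_prod_map _ _ (measurable_const_mul a)
          (measurable_const_mul s), Measure.map_map measurable_add (by fun_prop)]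
        rfl
    _ = gaussianReal 0 1 := by
        rw [gaussianReal_map_const_mul, gaussianReal_map_const_mul,
          gaussianReal_conv_gaussianReal]
        congr 1
        · ring
        · ext; simpa using has

theorem stdGaussian_map_smul_add_smul (n : ℕ) {a s : ℝ} (has : a ^ 2 + s ^ 2 = 1) :
    ((stdGaussian n).prod (stdGaussian n)).map (fun p => a • p.1 + s • p.2) = stdGaussian n := by
  rw [stdGaussian_eq_pi, ← (measurePreserving_arrowProdEquivProdArrow ℝ ℝ (Fin n) _ _).map_eq,
    Measure.map_map (by fun_prop) (MeasurableEquiv.measurable _)]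
  change Measure.map (fun (x : Fin n → ℝ × ℝ) i => a * (x i).1 + s * (x i).2) _ = _
  rw [Measure.pi_map_pi (f := fun (_ : Fin n) (p : ℝ × ℝ) => a * p.1 + s * p.2)
      fun _ => by fun_prop,
    gaussianReal_map_mul_add_mul has]

theorem lintegral_lintegral_stdGaussian_smul_add_smul (n : ℕ) {a s : ℝ}
    (has : a ^ 2 + s ^ 2 = 1) {f : (Fin n → ℝ) → ENNReal} (hf : Measurable f) :
    ∫⁻ x, ∫⁻ y, f (a • x + s • y) ∂stdGaussian n ∂stdGaussian n = ∫⁻ z, f z ∂stdGaussian n := by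
  conv_rhs => rw [← stdGaussian_map_smul_add_smul n has]
  have hmap : Measurable fun p : (Fin n → ℝ) × (Fin n → ℝ) => a • p.1 + s • p.2 := by fun_prop
  rw [lintegral_map hf hmap]
  exact (lintegral_prod _ (hf.comp hmap).aemeasurable).symm

theorem MeasureTheory.Integrable.comp_smul_add_smul_of_bounded {E G : Type*} [NormedAddCommGroup E]
    [NormedSpace ℝ E] [MeasurableSpace E] [OpensMeasurableSpace E] [SecondCountableTopology E]
    [NormedAddCommGroup G] (μ : Measure E) [IsFiniteMeasure μ] {f : E → G} (hf : Continuous f)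
    {K : ℝ} (hK : ∀ z, ‖f z‖ ≤ K) (a s : ℝ) (x : E) :
    Integrable (fun y => f (a • x + s • y)) μ :=
  Integrable.of_bound (hf.comp (by fun_prop)).aestronglyMeasurable _ (ae_of_all _ fun _ => hK _)

theorem hasFDerivAt_integral_comp_smul_add {E F : Type*} [NormedAddCommGroup E] [NormedSpace ℝ E]
    [MeasurableSpace E] [OpensMeasurableSpace E] [SecondCountableTopology E]
    [NormedAddCommGroup F] [NormedSpace ℝ F] [CompleteSpace F]
    (μ : Measure E) [IsFiniteMeasure μ] {u : E → F} (hu : ContDiff ℝ 1 u) {C : ℝ}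
    (hdu : ∀ z, ‖fderiv ℝ u z‖ ≤ C) (a s : ℝ) (x : E)
    (hint : Integrable (fun y => u (a • x + s • y)) μ) :
    HasFDerivAt (fun x => ∫ y, u (a • x + s • y) ∂μ)
      (∫ y, a • fderiv ℝ u (a • x + s • y) ∂μ) x := by
  have hcont : Continuous fun y => a • fderiv ℝ u (a • x + s • y) :=
    ((hu.continuous_fderiv one_ne_zero).comp (by fun_prop)).const_smul a
  refine hasFDerivAt_integral_of_dominated_of_fderiv_le (bound := fun _ => |a| * C)
    (F := fun x y => u (a • x + s • y)) (F' := fun x y => a • fderiv ℝ u (a • x + s • y))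
    univ_mem (Eventually.of_forall fun x' => ?_) hint hcont.aestronglyMeasurable
    (ae_of_all _ fun y x' _ => ?_) (integrable_const _) (ae_of_all _ fun y x' _ => ?_)
  · exact (hu.continuous.comp (by fun_prop)).aestronglyMeasurable
  · rw [norm_smul, Real.norm_eq_abs]
    exact mul_le_mul_of_nonneg_left (hdu _) (abs_nonneg a)
  · have hinner :
        HasFDerivAt (fun x'' : E => a • x'' + s • y) (a • ContinuousLinearMap.id ℝ E) x' :=
      ((hasFDerivAt_id x').const_smul a).add_const (s • y)
    have h := ((hu.differentiable one_ne_zero _).hasFDerivAt).comp x' hinner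
    rwa [ContinuousLinearMap.comp_smul, ContinuousLinearMap.comp_id] at h

lemma continuous_grad_apply {n : ℕ} {u : (Fin n → ℝ) → ℝ} (hu : ContDiff ℝ 1 u) (i : Fin n) :
    Continuous fun x => grad u x i :=
  (hu.continuous_fderiv one_ne_zero).clm_apply continuous_const

lemma abs_grad_le_sqrt {n : ℕ} {u : (Fin n → ℝ) → ℝ} {C : ℝ}
    (hgrad : ∀ x, ∑ i, grad u x i ^ 2 ≤ C) (x : Fin n → ℝ) (i : Fin n) :
    |grad u x i| ≤ Real.sqrt C :=
  Real.abs_le_sqrt <| (Finset.single_le_sum (fun j _ => sq_nonneg (grad u x j))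
    (Finset.mem_univ i)).trans (hgrad x)

lemma exists_norm_fderiv_le_of_sum_grad_sq_le {n : ℕ} {u : (Fin n → ℝ) → ℝ} {C : ℝ}
    (hgrad : ∀ x, ∑ i, grad u x i ^ 2 ≤ C) : ∃ C', ∀ x, ‖fderiv ℝ u x‖ ≤ C' :=
  ⟨_, fun x => (Pi.basisFun ℝ (Fin n)).opNorm_le (Real.sqrt_nonneg C) fun i => by
    simpa [grad] using abs_grad_le_sqrt hgrad x i⟩

lemma grad_ouSemigroup {n : ℕ} (t : ℝ) {u : (Fin n → ℝ) → ℝ} (hu : ContDiff ℝ 1 u) {M C : ℝ}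
    (hub : ∀ z, |u z| ≤ M) (hdu : ∀ z, ‖fderiv ℝ u z‖ ≤ C) (x : Fin n → ℝ) (i : Fin n) :
    grad (ouSemigroup n t u) x i = Real.exp (-t) *
      ∫ y, grad u (Real.exp (-t) • x + Real.sqrt (1 - Real.exp (-2 * t)) • y) i ∂stdGaussian n := by
  set a := Real.exp (-t)
  set s := Real.sqrt (1 - Real.exp (-2 * t))
  have hderiv := hasFDerivAt_integral_comp_smul_add (stdGaussian n) hu hdu a s x
    (.comp_smul_add_smul_of_bounded _ hu.continuous hub a s x)
  rw [grad, show ouSemigroup n t u = fun x => ∫ y, u (a • x + s • y) ∂stdGaussian n from rfl,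
    hderiv.fderiv, integral_smul, smul_apply, ContinuousLinearMap.integral_apply
      (.comp_smul_add_smul_of_bounded _ (hu.continuous_fderiv one_ne_zero) hdu a s x), smul_eq_mul]
  rfl

section CauchySchwarz

variable {α : Type*} [MeasurableSpace α] {μ : Measure α} {v g : α → ℝ}

theorem sq_lintegral_ofReal_abs_le (hv : AEMeasurable v μ) (hg : AEMeasurable g μ)
    (hgpos : ∀ x, 0 < g x) :
    (∫⁻ x, ENNReal.ofReal |v x| ∂μ) ^ 2
      ≤ (∫⁻ x, ENNReal.ofReal (v x ^ 2 / g x) ∂μ) * ∫⁻ x, ENNReal.ofReal (g x) ∂μ := by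
  have hsplit : ∀ x, ENNReal.ofReal |v x|
      = ENNReal.ofReal (v x ^ 2 / g x) ^ (1 / 2 : ℝ) * ENNReal.ofReal (g x) ^ (1 / 2 : ℝ) := by
    intro x
    have hq : 0 ≤ v x ^ 2 / g x := div_nonneg (sq_nonneg _) (hgpos x).le
    rw [ENNReal.ofReal_rpow_of_nonneg hq (by norm_num),
      ENNReal.ofReal_rpow_of_nonneg (hgpos x).le (by norm_num),
      ← ENNReal.ofReal_mul (by positivity),
      ← Real.sqrt_eq_rpow, ← Real.sqrt_eq_rpow, ← Real.sqrt_mul hq,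
      div_mul_cancel₀ _ (hgpos x).ne', Real.sqrt_sq_eq_abs]
  have holder := ENNReal.lintegral_mul_norm_pow_le (μ := μ) ((hv.pow_const 2).div hg).ennreal_ofReal
    hg.ennreal_ofReal (p := 1 / 2) (q := 1 / 2) (by norm_num) (by norm_num) (by norm_num)
  rw [lintegral_congr hsplit]
  calc _ ≤ ((∫⁻ x, ENNReal.ofReal (v x ^ 2 / g x) ∂μ) ^ (1 / 2 : ℝ)
        * (∫⁻ x, ENNReal.ofReal (g x) ∂μ) ^ (1 / 2 : ℝ)) ^ 2 := pow_le_pow_left' holder 2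
    _ = _ := by
      rw [mul_pow, ← ENNReal.rpow_mul_natCast, ← ENNReal.rpow_mul_natCast]
      norm_num

theorem ofReal_sq_integral_div_integral_le (hv : Integrable v μ) (hg : Integrable g μ)
    (hgpos : ∀ x, 0 < g x) :
    ENNReal.ofReal ((∫ x, v x ∂μ) ^ 2 / ∫ x, g x ∂μ) ≤ ∫⁻ x, ENNReal.ofReal (v x ^ 2 / g x) ∂μ := by
  rcases (integral_nonneg fun x => (hgpos x).le : 0 ≤ ∫ x, g x ∂μ).eq_or_lt with hzero | hpos
  · -- `∫ g = 0` only for `μ = 0`, and then the left-hand side is `ofReal (_ / 0) = 0`.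
    simp [← hzero]
  have hG := ofReal_integral_eq_lintegral_ofReal hg (ae_of_all _ fun x => (hgpos x).le)
  rw [ENNReal.ofReal_div_of_pos hpos, hG, ENNReal.div_le_iff (by simpa [← hG] using hpos)
    (by simp [← hG])]
  calc ENNReal.ofReal ((∫ x, v x ∂μ) ^ 2)
      ≤ (∫⁻ x, ENNReal.ofReal |v x| ∂μ) ^ 2 := by
        rw [← ofReal_integral_eq_lintegral_ofReal hv.abs (ae_of_all _ fun x => abs_nonneg _),
          ← ENNReal.ofReal_pow (integral_nonneg fun x => abs_nonneg _)]
        rw [← sq_abs]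
        exact ENNReal.ofReal_le_ofReal
          (pow_le_pow_left₀ (abs_nonneg _) abs_integral_le_integral_abs 2)
    _ ≤ _ := sq_lintegral_ofReal_abs_le hv.aemeasurable hg.aemeasurable hgpos

theorem ofReal_sum_sq_integral_div_integral_le {ι : Type*} [Fintype ι] {v : ι → α → ℝ}
    (hv : ∀ i, Integrable (v i) μ) (hg : Integrable g μ) (hgpos : ∀ x, 0 < g x) :
    ENNReal.ofReal ((∑ i, (∫ x, v i x ∂μ) ^ 2) / ∫ x, g x ∂μ)
      ≤ ∫⁻ x, ENNReal.ofReal ((∑ i, v i x ^ 2) / g x) ∂μ := by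
  simp_rw [Finset.sum_div]
  rw [ENNReal.ofReal_sum_of_nonneg fun i _ =>
    div_nonneg (sq_nonneg _) (integral_nonneg fun x => (hgpos x).le)]
  simp_rw [ENNReal.ofReal_sum_of_nonneg fun i _ => div_nonneg (sq_nonneg _) (hgpos _).le]
  rw [lintegral_finsetSum' (f := fun i x => ENNReal.ofReal (v i x ^ 2 / g x)) _ fun i _ =>
    (((hv i).aemeasurable.pow_const 2).div hg.aemeasurable).ennreal_ofReal]
  exact Finset.sum_le_sum fun i _ => ofReal_sq_integral_div_integral_le (hv i) hg hgpos

end CauchySchwarz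

lemma fisher_ouSemigroup_le {n : ℕ} (t : ℝ) {u : (Fin n → ℝ) → ℝ} (hu : ContDiff ℝ 1 u)
    (hupos : ∀ x, 0 < u x) {M C : ℝ} (hub : ∀ z, u z ≤ M)
    (hgrad : ∀ z, ∑ i, grad u z i ^ 2 ≤ C) (x : Fin n → ℝ) :
    ENNReal.ofReal ((∑ i, grad (ouSemigroup n t u) x i ^ 2) / ouSemigroup n t u x)
      ≤ ENNReal.ofReal (Real.exp (-t) ^ 2) * ∫⁻ y, ENNReal.ofReal
          ((∑ i, grad u (Real.exp (-t) • x + Real.sqrt (1 - Real.exp (-2 * t)) • y) i ^ 2)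
            / u (Real.exp (-t) • x + Real.sqrt (1 - Real.exp (-2 * t)) • y)) ∂stdGaussian n := by
  set a := Real.exp (-t)
  set s := Real.sqrt (1 - Real.exp (-2 * t))
  have habs : ∀ z, |u z| ≤ M := fun z => (abs_of_pos (hupos z)).trans_le (hub z)
  obtain ⟨C', hdu⟩ := exists_norm_fderiv_le_of_sum_grad_sq_le hgrad
  have hgrad_eq : ∑ i, grad (ouSemigroup n t u) x i ^ 2
      = a ^ 2 * ∑ i, (∫ y, grad u (a • x + s • y) i ∂stdGaussian n) ^ 2 := by
    simp_rw [grad_ouSemigroup t hu habs hdu, mul_pow, Finset.mul_sum]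
    rfl
  have hgrad_int : ∀ i, Integrable (fun y => grad u (a • x + s • y) i) (stdGaussian n) :=
    fun i => .comp_smul_add_smul_of_bounded _ (continuous_grad_apply hu i)
      (abs_grad_le_sqrt hgrad · i) a s x
  rw [hgrad_eq, show ouSemigroup n t u x = ∫ y, u (a • x + s • y) ∂stdGaussian n from rfl,
    mul_div_assoc, ENNReal.ofReal_mul (sq_nonneg a)]
  exact mul_le_mul_right (ofReal_sum_sq_integral_div_integral_le hgrad_int
    (.comp_smul_add_smul_of_bounded _ hu.continuous habs a s x) fun _ => hupos _) _

/-- Contraction of Fisher information under the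
Ornstein–Uhlenbeck semigroup:
`∫ |∇(Q_t u)|²/(Q_t u) dβ ≤ e^{−2t} ∫ |∇u|²/u dβ`, as an inequality in `[0, ∞]`. -/
theorem fisher_information_contraction (n : ℕ) (t : ℝ) (ht : 0 < t)
    (u : (Fin n → ℝ) → ℝ) (hu : ContDiff ℝ 1 u) (hupos : ∀ x, 0 < u x)
    (hubdd : ∃ C : ℝ, ∀ x, u x ≤ C)
    (hgradbdd : ∃ C : ℝ, ∀ x, ∑ i, grad u x i ^ 2 ≤ C) :
    ∫⁻ x, ENNReal.ofReal
        ((∑ i, grad (ouSemigroup n t u) x i ^ 2) / ouSemigroup n t u x) ∂(stdGaussian n)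
      ≤ ENNReal.ofReal (Real.exp (-2 * t)) *
        ∫⁻ x, ENNReal.ofReal ((∑ i, grad u x i ^ 2) / u x) ∂(stdGaussian n) := by
  obtain ⟨M, hub⟩ := hubdd
  obtain ⟨C, hgrad⟩ := hgradbdd
  have hexp : Real.exp (-t) ^ 2 = Real.exp (-2 * t) := by
    rw [← Real.exp_nat_mul]; ring_nf
  have hunit : Real.exp (-t) ^ 2 + Real.sqrt (1 - Real.exp (-2 * t)) ^ 2 = 1 := by
    rw [Real.sq_sqrt (by simp [ht.le]), hexp]; ring
  have hfisher : Measurable fun z => ENNReal.ofReal ((∑ i, grad u z i ^ 2) / u z) :=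
    ((continuous_finsetSum _ fun i _ => (continuous_grad_apply hu i).pow 2).div
      hu.continuous fun z => (hupos z).ne').measurable.ennreal_ofReal
  calc _ ≤ ∫⁻ x, ENNReal.ofReal (Real.exp (-t) ^ 2) * ∫⁻ y, ENNReal.ofReal
          ((∑ i, grad u (Real.exp (-t) • x + Real.sqrt (1 - Real.exp (-2 * t)) • y) i ^ 2)
            / u (Real.exp (-t) • x + Real.sqrt (1 - Real.exp (-2 * t)) • y)) ∂stdGaussian n
            ∂stdGaussian n :=
        lintegral_mono fun x => fisher_ouSemigroup_le t hu hupos hub hgrad x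
    _ = _ := by
        rw [lintegral_const_mul' _ _ ENNReal.ofReal_ne_top,
          lintegral_lintegral_stdGaussian_smul_add_smul n hunit hfisher, hexp]
end

section
/- Let β_n and β_m denote the standard Gaussian measures on ℝ^n and ℝ^m, and let F : ℝ^n × ℝ^m → (0,∞) be a bounded C¹ function with bounded gradient. Define the marginal F̄(x) = ∫ F(x,y) dβ_m(y). Then ∫ |∇F̄(x)|² / F̄(x) dβ_n(x) ≤ ∫∫ |∇F(x,y)|² / F(x,y) dβ_n(x) dβ_m(y), where ∇F denotes the full gradient of F on ℝ^n × ℝ^m. (This is the Fisher-information bound for conditional expectations used in the proof of Lemma 4.5.) -/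
open MeasureTheory Real Filter Topology

/-!
Differentiating under the integral sign, `∂ᵢF̄(x) = ∫ ∂_{xᵢ}F(x,y) dβ_m(y)`. For each `i`, the
Cauchy–Schwarz inequality with weight `F(x,·)` gives
`(∫ ∂_{xᵢ}F dβ_m)² ≤ (∫ F dβ_m) · ∫ (∂_{xᵢ}F)²/F dβ_m`; summing over `i` and integrating in `x`
bounds the left side by the `x`-part of the Fisher information of `F`, and the `y`-part is
nonnegative.
-/

theorem integrable_stdGaussian_density (k : ℕ) :
    Integrable (fun x : Fin k → ℝ =>
      (2 * π) ^ (-(k : ℝ) / 2) * Real.exp (-(∑ i, x i ^ 2) / 2)) := by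
  have h1 : Integrable (fun t : ℝ => Real.exp (-(1 / 2 : ℝ) * t ^ 2)) :=
    integrable_exp_neg_mul_sq (by norm_num)
  have hprod : Integrable (fun x : Fin k → ℝ => ∏ i, Real.exp (-(1 / 2 : ℝ) * x i ^ 2)) :=
    Integrable.fintype_prod (f := fun _ t => Real.exp (-(1 / 2 : ℝ) * t ^ 2)) fun _ => h1
  convert hprod.const_mul ((2 * π) ^ (-(k : ℝ) / 2)) using 2 with x
  rw [← Real.exp_sum, ← Finset.mul_sum]
  congr 2
  ring

instance (k : ℕ) : IsFiniteMeasure (stdGaussian k) :=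
  isFiniteMeasure_withDensity (integrable_stdGaussian_density k).lintegral_lt_top.ne

section CauchySchwarz

variable {α : Type*} [MeasurableSpace α] {μ : Measure α} {f g : α → ℝ}

/-- With `t = ∫ g / ∫ f`, the pointwise bound `2 t g - t² f ≤ g² / f` (the difference is
`(g - t f)² / f`) integrates to the claim. -/
theorem ofReal_sq_integral_div_integral_le_lintegral (hg : Integrable g μ)
    (hf : Integrable f μ) (hfpos : ∀ y, 0 < f y) :
    ENNReal.ofReal ((∫ y, g y ∂μ) ^ 2 / ∫ y, f y ∂μ)
      ≤ ∫⁻ y, ENNReal.ofReal (g y ^ 2 / f y) ∂μ := by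
  set I := ∫ y, g y ∂μ
  set J := ∫ y, f y ∂μ
  rcases (show 0 ≤ J from integral_nonneg fun y => (hfpos y).le).eq_or_lt with hJ | hJ
  · rw [← hJ, div_zero, ENNReal.ofReal_zero]
    exact zero_le
  by_cases htop : ∫⁻ y, ENNReal.ofReal (g y ^ 2 / f y) ∂μ = ⊤
  · rw [htop]
    exact le_top
  have hnn : ∀ y, 0 ≤ g y ^ 2 / f y := fun y => div_nonneg (sq_nonneg _) (hfpos y).le
  have hint : Integrable (fun y => g y ^ 2 / f y) μ :=
    ⟨((hg.aemeasurable.pow_const 2).div hf.aemeasurable).aestronglyMeasurable,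
      (hasFiniteIntegral_iff_ofReal (ae_of_all _ hnn)).mpr (lt_top_iff_ne_top.mpr htop)⟩
  rw [← ofReal_integral_eq_lintegral_ofReal hint (ae_of_all _ hnn)]
  refine ENNReal.ofReal_le_ofReal ?_
  set t := I / J with ht
  have hpoint : ∀ y, 2 * t * g y - t ^ 2 * f y ≤ g y ^ 2 / f y := fun y => by
    have hfy := hfpos y
    rw [← sub_nonneg, show g y ^ 2 / f y - (2 * t * g y - t ^ 2 * f y)
      = (g y - t * f y) ^ 2 / f y by field_simp; ring]
    positivity
  have hlin : ∫ y, (2 * t * g y - t ^ 2 * f y) ∂μ = 2 * t * I - t ^ 2 * J := by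
    rw [integral_sub (hg.const_mul _) (hf.const_mul _), integral_const_mul, integral_const_mul]
  calc I ^ 2 / J = 2 * t * I - t ^ 2 * J := by rw [ht]; field_simp; ring
    _ = ∫ y, (2 * t * g y - t ^ 2 * f y) ∂μ := hlin.symm
    _ ≤ _ := integral_mono ((hg.const_mul _).sub (hf.const_mul _)) hint hpoint

theorem ofReal_sum_sq_integral_div_integral_le_lintegral {ι : Type*} (s : Finset ι)
    {g : ι → α → ℝ} (hg : ∀ i ∈ s, Integrable (g i) μ) (hf : Integrable f μ)
    (hfpos : ∀ y, 0 < f y) :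
    ENNReal.ofReal ((∑ i ∈ s, (∫ y, g i y ∂μ) ^ 2) / ∫ y, f y ∂μ)
      ≤ ∫⁻ y, ENNReal.ofReal ((∑ i ∈ s, g i y ^ 2) / f y) ∂μ := by
  have hJ : 0 ≤ ∫ y, f y ∂μ := integral_nonneg fun y => (hfpos y).le
  simp only [Finset.sum_div]
  rw [ENNReal.ofReal_sum_of_nonneg fun i _ => div_nonneg (sq_nonneg _) hJ]
  calc ∑ i ∈ s, ENNReal.ofReal ((∫ y, g i y ∂μ) ^ 2 / ∫ y, f y ∂μ)
      ≤ ∑ i ∈ s, ∫⁻ y, ENNReal.ofReal (g i y ^ 2 / f y) ∂μ :=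
        Finset.sum_le_sum fun i hi =>
          ofReal_sq_integral_div_integral_le_lintegral (hg i hi) hf hfpos
    _ = ∫⁻ y, ∑ i ∈ s, ENNReal.ofReal (g i y ^ 2 / f y) ∂μ :=
        (lintegral_finsetSum' s fun i hi =>
          (((hg i hi).aemeasurable.pow_const 2).div hf.aemeasurable).ennreal_ofReal).symm
    _ = _ := lintegral_congr fun y =>
        (ENNReal.ofReal_sum_of_nonneg fun i _ =>
          div_nonneg (sq_nonneg _) (hfpos y).le).symm

end CauchySchwarz

section IntegralSnd

variable {E Y : Type*} [NormedAddCommGroup E] [NormedSpace ℝ E] [NormedAddCommGroup Y]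
  [NormedSpace ℝ Y] {F : E × Y → ℝ} {C : ℝ}

theorem norm_fderiv_comp_inl_le (hF' : ∀ p, ‖fderiv ℝ F p‖ ≤ C) (p : E × Y) :
    ‖(fderiv ℝ F p).comp (ContinuousLinearMap.inl ℝ E Y)‖ ≤ C :=
  calc _ ≤ ‖fderiv ℝ F p‖ * ‖ContinuousLinearMap.inl ℝ E Y‖ :=
        ContinuousLinearMap.opNorm_comp_le _ _
    _ ≤ C * 1 := mul_le_mul (hF' p) (ContinuousLinearMap.norm_inl_le_one _ _ _) (norm_nonneg _)
        ((norm_nonneg _).trans (hF' p))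
    _ = C := mul_one C

variable [MeasurableSpace Y] [BorelSpace Y] [SecondCountableTopology Y]
  {μ : Measure Y} [IsFiniteMeasure μ]

theorem integrable_fderiv_comp_inl (hF : ContDiff ℝ 1 F) (hF' : ∀ p, ‖fderiv ℝ F p‖ ≤ C)
    (x : E) :
    Integrable (fun y => (fderiv ℝ F (x, y)).comp (ContinuousLinearMap.inl ℝ E Y)) μ :=
  Integrable.of_bound
    (((hF.continuous_fderiv one_ne_zero).clm_comp continuous_const).comp
      (Continuous.prodMk_right x)).aestronglyMeasurable
    C (ae_of_all _ fun y => norm_fderiv_comp_inl_le hF' (x, y))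

theorem hasFDerivAt_integral_snd (hF : ContDiff ℝ 1 F) (hF' : ∀ p, ‖fderiv ℝ F p‖ ≤ C)
    {x : E} (hFx : Integrable (fun y => F (x, y)) μ) :
    HasFDerivAt (fun x' => ∫ y, F (x', y) ∂μ)
      (∫ y, (fderiv ℝ F (x, y)).comp (ContinuousLinearMap.inl ℝ E Y) ∂μ) x :=
  hasFDerivAt_integral_of_dominated_of_fderiv_le (bound := fun _ => C) Filter.univ_mem
    (Eventually.of_forall fun x' =>
      (hF.continuous.comp (Continuous.prodMk_right x')).aestronglyMeasurable)
    hFx (integrable_fderiv_comp_inl hF hF' x).aestronglyMeasurable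
    (ae_of_all _ fun y x' _ => norm_fderiv_comp_inl_le hF' (x', y)) (integrable_const C)
    (ae_of_all _ fun y x' _ =>
      ((hF.differentiable one_ne_zero (x', y)).hasFDerivAt).comp x'
        (hasFDerivAt_prodMk_left x' y))

theorem fderiv_integral_snd_apply (hF : ContDiff ℝ 1 F) (hF' : ∀ p, ‖fderiv ℝ F p‖ ≤ C)
    {x : E} (hFx : Integrable (fun y => F (x, y)) μ) (v : E) :
    fderiv ℝ (fun x' => ∫ y, F (x', y) ∂μ) x v = ∫ y, fderiv ℝ F (x, y) (v, 0) ∂μ := by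
  rw [(hasFDerivAt_integral_snd hF hF' hFx).fderiv,
    ContinuousLinearMap.integral_apply (integrable_fderiv_comp_inl hF hF' x)]
  rfl

end IntegralSnd

/-- Fisher-information bound for marginals (conditional
expectations): with `F̄(x) = ∫ F(x,y) dβ_m(y)`,
`∫ |∇F̄|²/F̄ dβ_n ≤ ∫∫ |∇F|²/F dβ_n dβ_m`. -/
theorem fisher_information_of_marginal (n m : ℕ)
    (F : (Fin n → ℝ) × (Fin m → ℝ) → ℝ)
    (hF : ContDiff ℝ 1 F) (hFpos : ∀ p, 0 < F p)
    (hFbdd : ∃ C : ℝ, ∀ p, F p ≤ C)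
    (hgradbdd : ∃ C : ℝ, ∀ p, ‖fderiv ℝ F p‖ ≤ C) :
    ∫⁻ x, ENNReal.ofReal
        ((∑ i, grad (fun x' => ∫ y, F (x', y) ∂(stdGaussian m)) x i ^ 2)
          / ∫ y, F (x, y) ∂(stdGaussian m)) ∂(stdGaussian n)
      ≤ ∫⁻ y, ∫⁻ x, ENNReal.ofReal
          (((∑ i, (fderiv ℝ F (x, y) (Pi.single i 1, 0)) ^ 2)
              + ∑ j, (fderiv ℝ F (x, y) (0, Pi.single j 1)) ^ 2) / F (x, y))
          ∂(stdGaussian n) ∂(stdGaussian m) := by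
  obtain ⟨C, hC⟩ := hFbdd
  obtain ⟨C', hC'⟩ := hgradbdd
  have hFx : ∀ x, Integrable (fun y => F (x, y)) (stdGaussian m) := fun x =>
    Integrable.of_bound (hF.continuous.comp (Continuous.prodMk_right x)).aestronglyMeasurable C
      (ae_of_all _ fun y => (Real.norm_of_nonneg (hFpos _).le).trans_le (hC _))
  calc _ ≤ ∫⁻ x, ∫⁻ y, ENNReal.ofReal
          ((∑ i, (fderiv ℝ F (x, y) (Pi.single i 1, 0)) ^ 2) / F (x, y))
          ∂(stdGaussian m) ∂(stdGaussian n) := lintegral_mono fun x => by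
        simp only [grad, fderiv_integral_snd_apply hF hC' (hFx x)]
        exact ofReal_sum_sq_integral_div_integral_le_lintegral _
          (fun i _ => (integrable_fderiv_comp_inl hF hC' x).apply_continuousLinearMap _)
          (hFx x) fun y => hFpos _
    _ ≤ ∫⁻ x, ∫⁻ y, ENNReal.ofReal
          (((∑ i, (fderiv ℝ F (x, y) (Pi.single i 1, 0)) ^ 2)
              + ∑ j, (fderiv ℝ F (x, y) (0, Pi.single j 1)) ^ 2) / F (x, y))
          ∂(stdGaussian m) ∂(stdGaussian n) := by
        gcongr with x y
        · exact (hFpos _).le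
        · exact le_add_of_nonneg_right (Finset.sum_nonneg fun j _ => sq_nonneg _)
    _ = _ := by
        refine lintegral_lintegral_swap (Measurable.aemeasurable ?_)
        have hF'm := fun v => measurable_fderiv_apply_const ℝ F v
        exact (Measurable.div (by fun_prop) hF.continuous.measurable).ennreal_ofReal
end

section
/- Let (Ω, 𝒜, ν) be a probability space, let (a_k) and (b_k) be sequences of nonnegative measurable functions on Ω, and let M > 0 be such that ∫ a_k² / (1 + b_k) dν ≤ M for every k. Assume the family (b_k) is uniformly integrable, i.e. for every ε > 0 there exists δ > 0 such that for every measurable set E with ν(E) < δ and every k, ∫_E b_k dν < ε. Then the family (a_k) is uniformly integrable: for every ε > 0 there exists δ > 0 such that ν(E) < δ implies ∫_E a_k dν < ε for all k. -/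
open MeasureTheory ENNReal

/- By AM-GM, `a ≤ a² / (2t(1 + b)) + t(1 + b)/2` pointwise for every `t > 0`. Integrating
over `E`, the first term contributes at most `M / 2t` whatever `E` is, and the second at most
`t/2 · (ν E + ∫_E b)`, which is small for small `ν E` by uniform integrability of `(b_k)`.
Taking `t` large and then `ν E` small makes `∫_E a_k` small uniformly in `k`. -/

lemma le_inv_two_mul_sq_div_add {x y t : ℝ} (ht : 0 < t) (hy : 0 < y) :
    x ≤ 1 / (2 * t) * (x ^ 2 / y) + t / 2 * y := by
  have key : 1 / (2 * t) * (x ^ 2 / y) + t / 2 * y - x = (x - t * y) ^ 2 / (2 * t * y) := by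
    field_simp
    ring
  linarith [key ▸ (by positivity : 0 ≤ (x - t * y) ^ 2 / (2 * t * y))]

section

variable {Ω : Type*} [MeasurableSpace Ω] {μ : Measure Ω} {f g : Ω → ℝ}

lemma setLIntegral_ofReal_le_sq_div_add (hg : Measurable g) (hg0 : ∀ x, 0 ≤ g x) {t : ℝ}
    (ht : 0 < t) (E : Set Ω) :
    ∫⁻ x in E, ENNReal.ofReal (f x) ∂μ ≤
      ENNReal.ofReal (1 / (2 * t)) * ∫⁻ x, ENNReal.ofReal (f x ^ 2 / (1 + g x)) ∂μ
        + ENNReal.ofReal (t / 2) * (μ E + ∫⁻ x in E, ENNReal.ofReal (g x) ∂μ) := by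
  have hpt : ∀ x, ENNReal.ofReal (f x) ≤
      ENNReal.ofReal (1 / (2 * t)) * ENNReal.ofReal (f x ^ 2 / (1 + g x))
        + ENNReal.ofReal (t / 2) * (1 + ENNReal.ofReal (g x)) := by
    intro x
    have hg1 : 0 < 1 + g x := by linarith [hg0 x]
    rw [← ofReal_one, ← ofReal_add zero_le_one (hg0 x), ← ofReal_mul (by positivity),
      ← ofReal_mul (by positivity), ← ofReal_add (by positivity) (by positivity)]
    exact ofReal_le_ofReal (le_inv_two_mul_sq_div_add ht hg1)
  calc ∫⁻ x in E, ENNReal.ofReal (f x) ∂μ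
      ≤ ∫⁻ x in E, (ENNReal.ofReal (1 / (2 * t)) * ENNReal.ofReal (f x ^ 2 / (1 + g x))
          + ENNReal.ofReal (t / 2) * (1 + ENNReal.ofReal (g x))) ∂μ := lintegral_mono hpt
    _ = ENNReal.ofReal (1 / (2 * t)) * ∫⁻ x in E, ENNReal.ofReal (f x ^ 2 / (1 + g x)) ∂μ
          + ENNReal.ofReal (t / 2) * (μ E + ∫⁻ x in E, ENNReal.ofReal (g x) ∂μ) := by
      rw [lintegral_add_right _ (by fun_prop),
        lintegral_const_mul' _ _ ofReal_ne_top,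
        lintegral_const_mul _ (by fun_prop),
        lintegral_add_left measurable_const, setLIntegral_const, one_mul]
    _ ≤ _ := by gcongr; exact Measure.restrict_le_self

lemma setLIntegral_ofReal_lt_of_sq_div_le (hg : Measurable g) (hg0 : ∀ x, 0 ≤ g x)
    {t M η : ℝ} (ht : 0 < t) (hM0 : 0 ≤ M)
    (hM : ∫⁻ x, ENNReal.ofReal (f x ^ 2 / (1 + g x)) ∂μ ≤ ENNReal.ofReal M) {E : Set Ω}
    (hE : μ E < ENNReal.ofReal η)
    (hgE : ∫⁻ x in E, ENNReal.ofReal (g x) ∂μ < ENNReal.ofReal η) :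
    ∫⁻ x in E, ENNReal.ofReal (f x) ∂μ <
      ENNReal.ofReal (1 / (2 * t) * M + t / 2 * (η + η)) := by
  have hη : 0 < η := ofReal_pos.mp (pos_of_gt hE)
  calc ∫⁻ x in E, ENNReal.ofReal (f x) ∂μ
      ≤ ENNReal.ofReal (1 / (2 * t)) * ∫⁻ x, ENNReal.ofReal (f x ^ 2 / (1 + g x)) ∂μ
        + ENNReal.ofReal (t / 2) * (μ E + ∫⁻ x in E, ENNReal.ofReal (g x) ∂μ) :=
      setLIntegral_ofReal_le_sq_div_add hg hg0 ht E
    _ < ENNReal.ofReal (1 / (2 * t)) * ENNReal.ofReal M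
          + ENNReal.ofReal (t / 2) * (ENNReal.ofReal η + ENNReal.ofReal η) := by
      have hfirst :
          ENNReal.ofReal (1 / (2 * t)) * ∫⁻ x, ENNReal.ofReal (f x ^ 2 / (1 + g x)) ∂μ
            ≤ ENNReal.ofReal (1 / (2 * t)) * ENNReal.ofReal M := by gcongr
      refine ENNReal.add_lt_add_of_le_of_lt
        (ne_top_of_le_ne_top (mul_ne_top ofReal_ne_top ofReal_ne_top) hfirst) hfirst ?_
      exact ENNReal.mul_lt_mul_right (by simpa using ht) ofReal_ne_top
        (ENNReal.add_lt_add hE hgE)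
    _ = _ := by
      rw [← ofReal_add hη.le hη.le, ← ofReal_mul (p := 1 / (2 * t)) (by positivity),
        ← ofReal_mul (p := t / 2) (by positivity), ← ofReal_add (by positivity) (by positivity)]

end

theorem uniform_integrability_transfer_general {Ω : Type*} [MeasurableSpace Ω]
    (ν : Measure Ω)
    (a b : ℕ → Ω → ℝ)
    (hbmeas : ∀ k, Measurable (b k))
    (hbnonneg : ∀ k x, 0 ≤ b k x)
    (M : ℝ) (hM : 0 < M)
    (hbound : ∀ k, ∫⁻ x, ENNReal.ofReal (a k x ^ 2 / (1 + b k x)) ∂ν ≤ ENNReal.ofReal M)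
    (hui : ∀ ε : ℝ, 0 < ε → ∃ δ : ℝ, 0 < δ ∧ ∀ E : Set Ω, MeasurableSet E →
      ν E < ENNReal.ofReal δ → ∀ k,
        ∫⁻ x in E, ENNReal.ofReal (b k x) ∂ν < ENNReal.ofReal ε) :
    ∀ ε : ℝ, 0 < ε → ∃ δ : ℝ, 0 < δ ∧ ∀ E : Set Ω, MeasurableSet E →
      ν E < ENNReal.ofReal δ → ∀ k,
        ∫⁻ x in E, ENNReal.ofReal (a k x) ∂ν < ENNReal.ofReal ε := by
  intro ε hε
  set t := 2 * M / ε
  set η := ε / (2 * t)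
  have ht : 0 < t := by positivity
  have hbudget : 1 / (2 * t) * M + t / 2 * (η + η) ≤ ε := by
    simp only [t, η]
    field_simp
    linarith
  obtain ⟨δ, hδ, hδui⟩ := hui η (by positivity)
  refine ⟨min δ η, lt_min hδ (by positivity), fun E hE hνE k => ?_⟩
  have hνE_lt : ∀ {r}, min δ η ≤ r → ν E < ENNReal.ofReal r :=
    fun h => hνE.trans_le (ofReal_le_ofReal h)
  calc ∫⁻ x in E, ENNReal.ofReal (a k x) ∂ν
      < ENNReal.ofReal (1 / (2 * t) * M + t / 2 * (η + η)) :=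
        setLIntegral_ofReal_lt_of_sq_div_le (hbmeas k) (hbnonneg k) ht hM.le (hbound k)
          (hνE_lt (min_le_right _ _)) (hδui E hE (hνE_lt (min_le_left _ _)) k)
    _ ≤ ENNReal.ofReal ε := ofReal_le_ofReal hbudget

/-- Transfer of uniform integrability: if
`∫ a_k²/(1 + b_k) dν ≤ M` for all `k` and the family `(b_k)` of nonnegative
functions is uniformly integrable, then the family `(a_k)` is uniformly
integrable. -/
theorem uniform_integrability_transfer {Ω : Type*} [MeasurableSpace Ω]
    (ν : Measure Ω) [IsProbabilityMeasure ν]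
    (a b : ℕ → Ω → ℝ)
    (hameas : ∀ k, Measurable (a k)) (hbmeas : ∀ k, Measurable (b k))
    (hanonneg : ∀ k x, 0 ≤ a k x) (hbnonneg : ∀ k x, 0 ≤ b k x)
    (M : ℝ) (hM : 0 < M)
    (hbound : ∀ k, ∫⁻ x, ENNReal.ofReal (a k x ^ 2 / (1 + b k x)) ∂ν ≤ ENNReal.ofReal M)
    (hui : ∀ ε : ℝ, 0 < ε → ∃ δ : ℝ, 0 < δ ∧ ∀ E : Set Ω, MeasurableSet E →
      ν E < ENNReal.ofReal δ → ∀ k,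
        ∫⁻ x in E, ENNReal.ofReal (b k x) ∂ν < ENNReal.ofReal ε) :
    ∀ ε : ℝ, 0 < ε → ∃ δ : ℝ, 0 < δ ∧ ∀ E : Set Ω, MeasurableSet E →
      ν E < ENNReal.ofReal δ → ∀ k,
        ∫⁻ x in E, ENNReal.ofReal (a k x) ∂ν < ENNReal.ofReal ε :=
  uniform_integrability_transfer_general ν a b hbmeas hbnonneg M hM hbound hui
end
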